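/- arXiv:0712.4151 — 3 statements merged into one kernel-verified Lean document; each statement's English description precedes it below -/
import Mathlib

section
/- For every natural number N there exists a connected graph G with more than N vertices such that every vertex of G has degree 2 or 3, no component of G has exactly 5 vertices, G is a subdivision of a cubic 3-connected graph, and λ(G) = ⌈v(G)/4⌉ (i.e., the lower bound λ(G) ≥ ⌈v(G)/4⌉ is attained). -/
open SimpleGraph

/-- `p` encodes a 3-vertex path (a `Λ`) in `G`: three distinct vertices, the first
adjacent to the second and the second adjacent to the third. -/
def IsPathL {V : Type*} (G : SimpleGraph V) (p : V × V × V) : Prop :=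
  p.1 ≠ p.2.1 ∧ p.2.1 ≠ p.2.2 ∧ p.1 ≠ p.2.2 ∧ G.Adj p.1 p.2.1 ∧ G.Adj p.2.1 p.2.2

/-- The vertex set of an encoded 3-vertex path. -/
def pVerts {V : Type*} (p : V × V × V) : Set V := {p.1, p.2.1, p.2.2}

/-- The edge set of an encoded 3-vertex path. -/
def pEdges {V : Type*} (p : V × V × V) : Set (Sym2 V) := {s(p.1, p.2.1), s(p.2.1, p.2.2)}

/-- A `Λ`-packing of `G`: a collection of pairwise vertex-disjoint 3-vertex paths of `G`. -/
def IsPacking {V : Type*} (G : SimpleGraph V) (P : Finset (V × V × V)) : Prop :=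
  (∀ p ∈ P, IsPathL G p) ∧
  ∀ p ∈ P, ∀ q ∈ P, p ≠ q → Disjoint (pVerts p) (pVerts q)

/-- A `Λ`-factor of the induced subgraph of `G` on the vertex set `S`:
a `Λ`-packing whose paths lie in `S` and together cover all of `S`. -/
def IsFactorOn {V : Type*} (G : SimpleGraph V) (S : Set V) (P : Finset (V × V × V)) : Prop :=
  IsPacking G P ∧ (∀ p ∈ P, pVerts p ⊆ S) ∧ ∀ v ∈ S, ∃ p ∈ P, v ∈ pVerts p

/-- A `Λ`-factor of `G`. -/
def IsFactor {V : Type*} (G : SimpleGraph V) (P : Finset (V × V × V)) : Prop :=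
  IsFactorOn G Set.univ P

/-- The packing `P` contains the edge `e`. -/
def PContains {V : Type*} (P : Finset (V × V × V)) (e : Sym2 V) : Prop :=
  ∃ p ∈ P, e ∈ pEdges p

/-- `λ(G)`: the maximum number of pairwise disjoint 3-vertex paths in `G`. -/
noncomputable def lambdaNum {V : Type*} (G : SimpleGraph V) [Fintype V] : ℕ :=
  sSup {n | ∃ P : Finset (V × V × V), IsPacking G P ∧ P.card = n}

/-- Every vertex of `G` has degree exactly 3. -/
def IsCubic {V : Type*} (G : SimpleGraph V) : Prop :=
  ∀ v, (G.neighborSet v).ncard = 3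

/-- `G` is `k`-connected: more than `k` vertices, and deleting any set of fewer than
`k` vertices leaves a connected graph. -/
def KConnected {V : Type*} (k : ℕ) (G : SimpleGraph V) [Fintype V] : Prop :=
  k < Fintype.card V ∧ ∀ S : Set V, S.ncard < k → (G.induce Sᶜ).Connected

/-- `G` is a subdivision of `H`: the vertices of `H` embed into `G` via `f`, each edge
`uv` of `H` is replaced by a path of `G` from `f u` to `f v`, these paths are internally
disjoint from each other and from the branch vertices, and together they use up all
vertices and edges of `G`. -/
def IsSubdivision {α β : Type*} (G : SimpleGraph α) (H : SimpleGraph β) : Prop :=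
  ∃ f : β → α, Function.Injective f ∧
    ∃ P : ∀ ⦃u v : β⦄, H.Adj u v → G.Walk (f u) (f v),
      (∀ u v (h : H.Adj u v), (P h).IsPath) ∧
      (∀ u v (h : H.Adj u v), P h.symm = (P h).reverse) ∧
      (∀ u v (h : H.Adj u v), ∀ x ∈ (P h).support, x ∈ Set.range f → x = f u ∨ x = f v) ∧
      (∀ u v (h : H.Adj u v), ∀ u' v' (h' : H.Adj u' v'), s(u, v) ≠ s(u', v') →
        ∀ x ∈ (P h).support, x ∈ (P h').support → x ∈ Set.range f) ∧
      (∀ x : α, x ∈ Set.range f ∨ ∃ (u v : β) (h : H.Adj u v), x ∈ (P h).support) ∧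
      (∀ e ∈ G.edgeSet, ∃ (u v : β) (h : H.Adj u v), e ∈ (P h).edges)


lemma modc {q x : ℕ} (hq : 0 < q) (h : x < 2*q) :
    (x % q = x ∧ x < q) ∨ (q ≤ x ∧ x % q = x - q) := by
  rcases Nat.lt_or_ge x q with h'|h'
  · exact Or.inl ⟨Nat.mod_eq_of_lt h', h'⟩
  · exact Or.inr ⟨h', by rw [Nat.mod_eq_sub_mod h', Nat.mod_eq_of_lt (by omega)]⟩

section H
variable (k : ℕ) (hk : 5 ≤ k)

def sh (u : Fin (2*k)) (t : ℕ) : Fin (2*k) :=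
  ⟨(u.val + t) % (2*k), Nat.mod_lt _ (by omega)⟩

variable {k}

lemma sh_val (u : Fin (2*k)) (t : ℕ) : (sh k hk u t).val = (u.val + t) % (2*k) := rfl

lemma sh0 (u : Fin (2*k)) : sh k hk u 0 = u := by
  apply Fin.ext; simp [sh_val, Nat.mod_eq_of_lt u.isLt]

lemma shadd (u : Fin (2*k)) (a b : ℕ) : sh k hk (sh k hk u a) b = sh k hk u (a+b) := by
  apply Fin.ext
  simp only [sh_val]
  rw [Nat.mod_add_mod]
  ring_nf

lemma shq (u : Fin (2*k)) : sh k hk u (2*k) = u := by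
  apply Fin.ext
  simp [sh_val, Nat.add_mod_right, Nat.mod_eq_of_lt u.isLt]

variable (k) in
def HH : SimpleGraph (Fin (2*k)) where
  Adj a b := b = sh k hk a 1 ∨ a = sh k hk b 1 ∨ b = sh k hk a k ∨ a = sh k hk b k
  symm := by constructor; intro a b h; tauto
  loopless := by
    constructor
    intro a h
    have ha := a.isLt
    rcases h with h|h|h|h <;> (
      have := congrArg Fin.val h
      rw [sh_val] at this
      first
      | (rcases modc (q := 2*k) (by omega) (x := a.val + 1) (by omega) with ⟨h1,h2⟩|⟨h1,h2⟩ <;> omega)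
      | (rcases modc (q := 2*k) (by omega) (x := a.val + k) (by omega) with ⟨h1,h2⟩|⟨h1,h2⟩ <;> omega))

lemma HH_adj_iff (a b : Fin (2*k)) :
    (HH k hk).Adj a b ↔ (b = sh k hk a 1 ∨ a = sh k hk b 1 ∨ b = sh k hk a k ∨ a = sh k hk b k) :=
  Iff.rfl

lemma adj_sh1 (u : Fin (2*k)) : (HH k hk).Adj u (sh k hk u 1) := Or.inl rfl

lemma adj_shk (u : Fin (2*k)) : (HH k hk).Adj u (sh k hk u k) := by
  right; right; left; rfl

-- sh equality reasoning: sh u a = sh u b with a,b ≤ 2k decide by val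
lemma sh_eq_iff (u : Fin (2*k)) {a b : ℕ} (ha : a ≤ 2*k) (hb : b ≤ 2*k) :
    sh k hk u a = sh k hk u b ↔ (a = b ∨ a + 2*k = b ∨ b + 2*k = a) := by
  have hu := u.isLt
  constructor
  · intro h
    have := congrArg Fin.val h
    rw [sh_val, sh_val] at this
    rcases modc (q := 2*k) (by omega) (x := u.val + a) (by omega) with ⟨h1,h2⟩|⟨h1,h2⟩ <;>
      rcases modc (q := 2*k) (by omega) (x := u.val + b) (by omega) with ⟨h3,h4⟩|⟨h3,h4⟩ <;> omega
  · intro h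
    apply Fin.ext
    rw [sh_val, sh_val]
    rcases modc (q := 2*k) (by omega) (x := u.val + a) (by omega) with ⟨h1,h2⟩|⟨h1,h2⟩ <;>
      rcases modc (q := 2*k) (by omega) (x := u.val + b) (by omega) with ⟨h3,h4⟩|⟨h3,h4⟩ <;> omega

lemma cubicH : IsCubic (HH k hk) := by
  intro u
  have hu := u.isLt
  have hset : (HH k hk).neighborSet u = {sh k hk u 1, sh k hk u (2*k-1), sh k hk u k} := by
    ext b
    have hb := b.isLt
    simp only [mem_neighborSet, HH_adj_iff, Set.mem_insert_iff, Set.mem_singleton_iff]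
    constructor
    · rintro (h|h|h|h)
      · exact Or.inl h
      · -- u = sh b 1  →  b = sh u (2k-1)
        refine Or.inr (Or.inl ?_)
        have := congrArg Fin.val h
        rw [sh_val] at this
        apply Fin.ext
        rw [sh_val]
        rcases modc (q := 2*k) (by omega) (x := b.val + 1) (by omega) with ⟨h1,h2⟩|⟨h1,h2⟩ <;>
          rcases modc (q := 2*k) (by omega) (x := u.val + (2*k-1)) (by omega) with ⟨h3,h4⟩|⟨h3,h4⟩ <;> omega
      · exact Or.inr (Or.inr h)
      · refine Or.inr (Or.inr ?_)
        have := congrArg Fin.val h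
        rw [sh_val] at this
        apply Fin.ext
        rw [sh_val]
        rcases modc (q := 2*k) (by omega) (x := b.val + k) (by omega) with ⟨h1,h2⟩|⟨h1,h2⟩ <;>
          rcases modc (q := 2*k) (by omega) (x := u.val + k) (by omega) with ⟨h3,h4⟩|⟨h3,h4⟩ <;> omega
    · rintro (h|h|h)
      · exact Or.inl h
      · subst h
        refine Or.inr (Or.inl ?_)
        apply Fin.ext
        rw [sh_val, sh_val]
        rcases modc (q := 2*k) (by omega) (x := u.val + (2*k-1)) (by omega) with ⟨h1,h2⟩|⟨h1,h2⟩ <;>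
          [skip; skip] <;>
          (rcases modc (q := 2*k) (by omega) (x := ((u.val + (2*k-1)) % (2*k)) + 1) (by
              have := Nat.mod_lt (u.val + (2*k-1)) (show 0 < 2*k by omega); omega) with ⟨h3,h4⟩|⟨h3,h4⟩ <;> omega)
      · exact Or.inr (Or.inr (Or.inl h))
  rw [hset]
  rw [Set.ncard_eq_three]
  refine ⟨_, _, _, ?_, ?_, ?_, rfl⟩
  · rw [Ne, sh_eq_iff hk u (by omega) (by omega)]; omega
  · rw [Ne, sh_eq_iff hk u (by omega) (by omega)]; omega
  · rw [Ne, sh_eq_iff hk u (by omega) (by omega)]; omega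

end H

section Conn
variable {k : ℕ} (hk : 5 ≤ k) (S : Set (Fin (2*k)))

def Rch (x y : Fin (2*k)) : Prop :=
  ∃ (hx : x ∈ Sᶜ) (hy : y ∈ Sᶜ), ((HH k hk).induce Sᶜ).Reachable ⟨x, hx⟩ ⟨y, hy⟩

variable {hk S}

lemma Rch.refl {x : Fin (2*k)} (hx : x ∉ S) : Rch hk S x x := ⟨hx, hx, by rfl⟩

lemma Rch.trans {x y z : Fin (2*k)} (h1 : Rch hk S x y) (h2 : Rch hk S y z) :
    Rch hk S x z := by
  obtain ⟨hx, hy, r1⟩ := h1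
  obtain ⟨hy', hz, r2⟩ := h2
  exact ⟨hx, hz, r1.trans r2⟩

lemma Rch.symm {x y : Fin (2*k)} (h : Rch hk S x y) : Rch hk S y x := by
  obtain ⟨hx, hy, r⟩ := h
  exact ⟨hy, hx, r.symm⟩

lemma Rch.single {x y : Fin (2*k)} (hx : x ∉ S) (hy : y ∉ S)
    (h : (HH k hk).Adj x y) : Rch hk S x y := by
  refine ⟨hx, hy, Adj.reachable ?_⟩
  exact h

lemma arc (u : Fin (2*k)) (t : ℕ) (h : ∀ j ≤ t, sh k hk u j ∉ S) :
    Rch hk S u (sh k hk u t) := by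
  induction t with
  | zero => rw [sh0]; exact Rch.refl (by simpa [sh0] using h 0 le_rfl)
  | succ n ih =>
    refine (ih (fun j hj => h j (by omega))).trans (Rch.single (h n (by omega)) (h (n+1) le_rfl) ?_)
    rw [show sh k hk u (n+1) = sh k hk (sh k hk u n) 1 from (shadd hk u n 1).symm]
    exact adj_sh1 hk _

lemma main_step (s1 s2 : Fin (2*k)) (hS : S ⊆ {s1, s2}) :
    ∀ t, t < 2*k → ∀ u : Fin (2*k), u ∉ S → sh k hk u t ∉ S → Rch hk S u (sh k hk u t) := by
  intro t
  induction t using Nat.strong_induction_on with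
  | _ t ih =>
  intro htq u hu hut
  rcases Nat.eq_zero_or_pos t with rfl|ht1
  · rw [sh0]; exact Rch.refl hu
  by_cases h1 : sh k hk u 1 ∈ S
  · by_cases h2 : sh k hk u 2 ∈ S
    · -- S "=" {u+1, u+2}
      have hne12 : sh k hk u 1 ≠ sh k hk u 2 := by
        rw [Ne, sh_eq_iff hk u (by omega) (by omega)]; omega
      have hS' : ∀ x ∈ S, x = sh k hk u 1 ∨ x = sh k hk u 2 := by
        intro x hx
        rcases hS hx with h|h <;> rcases hS h1 with e1|e1 <;> rcases hS h2 with e2|e2 <;>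
          simp_all <;> tauto
      have ht3 : 3 ≤ t := by
        rcases Nat.lt_or_ge t 3 with h|h
        · interval_cases t
          · exact absurd h1 (by simpa using hut)
          · exact absurd h2 (by simpa using hut)
        · exact h
      have hnot : ∀ c : ℕ, c ≤ 2*k → c ≠ 1 → c ≠ 2 → sh k hk u c ∉ S := by
        intro c hc hc1 hc2 hmem
        rcases hS' _ hmem with h|h <;>
          (rw [sh_eq_iff hk u hc (by omega)] at h; omega)
      -- u → sh u k
      have w1 : Rch hk S u (sh k hk u k) :=
        Rch.single hu (hnot k (by omega) (by omega) (by omega)) (adj_shk hk u)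
      -- arc sh u k → sh u (k+3)
      have w2 : Rch hk S (sh k hk u k) (sh k hk u (k+3)) := by
        have := arc (sh k hk u k) 3 (S := S) (hk := hk) ?_
        · rwa [shadd] at this
        · intro j hj
          rw [shadd]
          exact hnot (k+j) (by omega) (by omega) (by omega)
      -- chord sh u (k+3) → sh u 3
      have w3 : Rch hk S (sh k hk u (k+3)) (sh k hk u 3) := by
        refine (Rch.single (hnot 3 (by omega) (by omega) (by omega))
          (hnot (k+3) (by omega) (by omega) (by omega)) ?_).symm
        rw [show sh k hk u (k+3) = sh k hk (sh k hk u 3) k by rw [shadd]; ring_nf]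
        exact adj_shk hk _
      have wu3 : Rch hk S u (sh k hk u 3) := (w1.trans w2).trans w3
      have wrest : Rch hk S (sh k hk u 3) (sh k hk u t) := by
        have := ih (t-3) (by omega) (by omega) (sh k hk u 3)
          (hnot 3 (by omega) (by omega) (by omega)) ?_
        · rwa [shadd, show 3 + (t-3) = t by omega] at this
        · rw [shadd, show 3 + (t-3) = t by omega]; exact hut
      exact wu3.trans wrest
    · -- u+1 ∈ S, u+2 ∉ S : W1 / W2 dichotomy
      have hb : ∃ b, S ⊆ {sh k hk u 1, b} := by
        rcases hS h1 with e|e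
        · exact ⟨s2, by rw [← e] at hS; exact hS⟩
        · refine ⟨s1, ?_⟩
          intro x hx
          rcases hS hx with h|h
          · exact Or.inr h
          · rw [← e] at h; exact Or.inl h
      obtain ⟨b, hSb⟩ := hb
      have ht2 : 2 ≤ t := by
        rcases Nat.lt_or_ge t 2 with h|h
        · interval_cases t
          · exact absurd h1 (by simpa using hut)
        · exact h
      have hu2 : Rch hk S u (sh k hk u 2) := by
        by_cases hb1 : ∀ j, j ≤ k-2 → sh k hk u (2+j) ≠ b
        · -- W1: u -chord- sh u k -arc back- sh u 2
          have hcond : ∀ j ≤ k-2, sh k hk (sh k hk u 2) j ∉ S := by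
            intro j hj hmem
            rw [shadd] at hmem
            rcases hSb hmem with h|h
            · rw [sh_eq_iff hk u (by omega) (by omega)] at h; omega
            · exact hb1 j hj h
          have harc := arc (sh k hk u 2) (k-2) hcond
          rw [shadd, show 2 + (k-2) = k by omega] at harc
          have hchord : Rch hk S u (sh k hk u k) := by
            refine Rch.single hu ?_ (adj_shk hk u)
            have := hcond (k-2) le_rfl
            rwa [shadd, show 2 + (k-2) = k by omega] at this
          exact hchord.trans harc.symm
        · push_neg at hb1
          obtain ⟨j0, hj0, hbe⟩ := hb1
          -- W2: u -arc back- sh u (k+2) -chord- sh u 2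
          have hcond : ∀ j ≤ k-2, sh k hk (sh k hk u (k+2)) j ∉ S := by
            intro j hj hmem
            rw [shadd] at hmem
            rcases hSb hmem with h|h
            · rw [sh_eq_iff hk u (by omega) (by omega)] at h; omega
            · have h' : sh k hk u (k+2+j) = sh k hk u (2+j0) := by rw [hbe]; exact h
              rw [sh_eq_iff hk u (by omega) (by omega)] at h'; omega
          have harc := arc (sh k hk u (k+2)) (k-2) hcond
          rw [shadd, show k + 2 + (k-2) = 2*k by omega, shq] at harc
          have hk2S : sh k hk u (k+2) ∉ S := by
            have := hcond 0 (by omega)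
            rwa [shadd, Nat.add_zero] at this
          have hchord : Rch hk S (sh k hk u (k+2)) (sh k hk u 2) := by
            refine (Rch.single h2 hk2S ?_).symm
            rw [show sh k hk u (k+2) = sh k hk (sh k hk u 2) k by rw [shadd]; ring_nf]
            exact adj_shk hk _
          exact harc.symm.trans hchord
      have wrest : Rch hk S (sh k hk u 2) (sh k hk u t) := by
        have := ih (t-2) (by omega) (by omega) (sh k hk u 2) h2 ?_
        · rwa [shadd, show 2 + (t-2) = t by omega] at this
        · rw [shadd, show 2 + (t-2) = t by omega]; exact hut
      exact hu2.trans wrest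
  · -- easy step
    have hstep : Rch hk S u (sh k hk u 1) := Rch.single hu h1 (adj_sh1 hk u)
    have wrest : Rch hk S (sh k hk u 1) (sh k hk u t) := by
      have := ih (t-1) (by omega) (by omega) (sh k hk u 1) h1 ?_
      · rwa [shadd, show 1 + (t-1) = t by omega] at this
      · rw [shadd, show 1 + (t-1) = t by omega]; exact hut
    exact hstep.trans wrest

lemma smallSub2 (hk5 : 5 ≤ k) (hcard : S.ncard < 3) : ∃ s1 s2, S ⊆ {s1, s2} := by
  have hfin : S.Finite := Set.toFinite S
  interval_cases h : S.ncard
  · rw [Set.ncard_eq_zero hfin] at h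
    exact ⟨⟨0, by omega⟩, ⟨0, by omega⟩, by simp [h]⟩
  · rw [Set.ncard_eq_one] at h
    obtain ⟨a, ha⟩ := h
    exact ⟨a, a, by simp [ha]⟩
  · rw [Set.ncard_eq_two] at h
    obtain ⟨a, b, _, hab⟩ := h
    exact ⟨a, b, by simp [hab]⟩

lemma connH (hcard : S.ncard < 3) : ((HH k hk).induce Sᶜ).Connected := by
  obtain ⟨s1, s2, hS⟩ := smallSub2 (S := S) hk hcard
  have hcompl : ∃ x : Fin (2*k), x ∉ S := by
    by_contra h
    push_neg at h
    have : (Set.univ : Set (Fin (2*k))).ncard < 3 := by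
      rw [show (Set.univ : Set (Fin (2*k))) = S from
        (Set.eq_univ_iff_forall.mpr h).symm]
      exact hcard
    rw [Set.ncard_univ, Nat.card_eq_fintype_card, Fintype.card_fin] at this
    omega
  obtain ⟨x0, hx0⟩ := hcompl
  rw [connected_iff]
  constructor
  · rintro ⟨x, hx⟩ ⟨y, hy⟩
    set t := (y.val + 2*k - x.val) % (2*k) with hdef
    have hx' := x.isLt
    have hy' := y.isLt
    have htq : t < 2*k := Nat.mod_lt _ (by omega)
    have hxy : sh k hk x t = y := by
      apply Fin.ext
      rw [sh_val, hdef]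
      rcases modc (q := 2*k) (by omega) (x := y.val + 2*k - x.val) (by omega) with ⟨h1,h2⟩|⟨h2,h1⟩ <;> rw [h1]
      · rcases modc (q := 2*k) (by omega) (x := x.val + (y.val + 2*k - x.val)) (by omega) with ⟨h3,h4⟩|⟨h3,h4⟩ <;> omega
      · rcases modc (q := 2*k) (by omega) (x := x.val + (y.val + 2*k - x.val - 2*k)) (by omega) with ⟨h3,h4⟩|⟨h3,h4⟩ <;> omega
    have := main_step s1 s2 hS t htq x hx (by rw [hxy]; exact hy)
    rw [hxy] at this
    obtain ⟨hx2, hy2, r⟩ := this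
    exact r
  · exact ⟨⟨x0, hx0⟩⟩

lemma kconnH : KConnected 3 (HH k hk) := by
  constructor
  · rw [Fintype.card_fin]; omega
  · intro S hS
    exact connH hS

end Conn

section G
variable (k : ℕ)

def gRel (x y : ℕ) : Prop :=
  (∃ i, i < 2*k ∧ x = i ∧ y = 2*k + 2*i) ∨
  (∃ i, i < 2*k ∧ x = 2*k + 2*i ∧ y = 2*k + 2*i + 1) ∨
  (∃ i, i < 2*k ∧ x = 2*k + 2*i + 1 ∧ y = (i+1) % (2*k)) ∨
  (∃ i, i < k ∧ x = i ∧ y = 6*k + 2*i) ∨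
  (∃ i, i < k ∧ x = 6*k + 2*i ∧ y = 6*k + 2*i + 1) ∨
  (∃ i, i < k ∧ x = 6*k + 2*i + 1 ∧ y = i + k)

def GG : SimpleGraph (Fin (8*k)) where
  Adj a b := gRel k a.val b.val ∨ gRel k b.val a.val
  symm := by constructor; intro a b h; exact h.symm
  loopless := by
    constructor
    intro a h
    have : ¬ gRel k a.val a.val := by
      rintro (⟨i,hi,e1,e2⟩|⟨i,hi,e1,e2⟩|⟨i,hi,e1,e2⟩|⟨i,hi,e1,e2⟩|⟨i,hi,e1,e2⟩|⟨i,hi,e1,e2⟩)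
      · omega
      · omega
      · have := Nat.mod_lt (i+1) (show 0 < 2*k by omega); omega
      · omega
      · omega
      · omega
    tauto

def vA (i : ℕ) (h : i < 2*k) : Fin (8*k) := ⟨i, by omega⟩
def vB (i : ℕ) (h : i < 2*k) : Fin (8*k) := ⟨2*k+2*i, by omega⟩
def vC (i : ℕ) (h : i < 2*k) : Fin (8*k) := ⟨2*k+2*i+1, by omega⟩
def vD (i : ℕ) (h : i < 2*k) : Fin (8*k) :=
  ⟨(i+1) % (2*k), by have := Nat.mod_lt (i+1) (show 0 < 2*k by omega); omega⟩
def wB (j : ℕ) (h : j < k) : Fin (8*k) := ⟨6*k+2*j, by omega⟩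
def wC (j : ℕ) (h : j < k) : Fin (8*k) := ⟨6*k+2*j+1, by omega⟩
def wD (j : ℕ) (h : j < k) : Fin (8*k) := ⟨j+k, by omega⟩

lemma adjAB (i : ℕ) (h : i < 2*k) : (GG k).Adj (vA k i h) (vB k i h) :=
  Or.inl (Or.inl ⟨i, h, rfl, rfl⟩)
lemma adjBC (i : ℕ) (h : i < 2*k) : (GG k).Adj (vB k i h) (vC k i h) :=
  Or.inl (Or.inr (Or.inl ⟨i, h, rfl, rfl⟩))
lemma adjCD (i : ℕ) (h : i < 2*k) : (GG k).Adj (vC k i h) (vD k i h) :=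
  Or.inl (Or.inr (Or.inr (Or.inl ⟨i, h, rfl, rfl⟩)))
lemma adjAB' (j : ℕ) (h : j < k) : (GG k).Adj (vA k j (by omega)) (wB k j h) :=
  Or.inl (Or.inr (Or.inr (Or.inr (Or.inl ⟨j, h, rfl, rfl⟩))))
lemma adjBC' (j : ℕ) (h : j < k) : (GG k).Adj (wB k j h) (wC k j h) :=
  Or.inl (Or.inr (Or.inr (Or.inr (Or.inr (Or.inl ⟨j, h, rfl, rfl⟩)))))
lemma adjCD' (j : ℕ) (h : j < k) : (GG k).Adj (wC k j h) (wD k j h) :=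
  Or.inl (Or.inr (Or.inr (Or.inr (Or.inr (Or.inr ⟨j, h, rfl, rfl⟩))))) 

def walkCyc (i : ℕ) (h : i < 2*k) : (GG k).Walk (vA k i h) (vD k i h) :=
  .cons (adjAB k i h) (.cons (adjBC k i h) (.cons (adjCD k i h) .nil))

def walkChord (j : ℕ) (h : j < k) : (GG k).Walk (vA k j (by omega)) (wD k j h) :=
  .cons (adjAB' k j h) (.cons (adjBC' k j h) (.cons (adjCD' k j h) .nil))

def fEmb (a : Fin (2*k)) : Fin (8*k) := ⟨a.val, by have := a.isLt; omega⟩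

lemma fEmb_inj : Function.Injective (fEmb k) := by
  intro a b h
  have h2 : (fEmb k a).val = (fEmb k b).val := congrArg Fin.val h
  exact Fin.ext h2

def hA (i : ℕ) (h : i < 2*k) : Fin (2*k) := ⟨i, h⟩
def hD (i : ℕ) (h : i < 2*k) : Fin (2*k) :=
  ⟨(i+1) % (2*k), Nat.mod_lt _ (by omega)⟩
def hDk (j : ℕ) (h : j < k) : Fin (2*k) := ⟨j+k, by omega⟩

variable {k} (hk : 5 ≤ k)

lemma adj_cyc (i : ℕ) (h : i < 2*k) : (HH k hk).Adj (hA k i h) (hD k i h) := Or.inl rfl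

lemma adj_chord (j : ℕ) (h : j < k) : (HH k hk).Adj (hA k j (by omega)) (hDk k j h) := by
  right; right; left
  apply Fin.ext
  rw [sh_val]
  simp only [hA, hDk]
  exact (Nat.mod_eq_of_lt (by omega)).symm

lemma fact_chord {u v : Fin (2*k)} (h : (HH k hk).Adj u v)
    (h1 : ¬ v = sh k hk u 1) (h2 : ¬ u = sh k hk v 1) :
    v.val = (u.val + k) % (2*k) ∧ u.val = (v.val + k) % (2*k) := by
  have hu := u.isLt; have hv := v.isLt
  rcases h with h|h|h|h
  · exact absurd h h1
  · exact absurd h h2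
  · have e := congrArg Fin.val h
    rw [sh_val] at e
    refine ⟨e, ?_⟩
    rcases modc (q := 2*k) (by omega) (x := u.val + k) (by omega) with ⟨a1,a2⟩|⟨a2,a1⟩ <;>
      rcases modc (q := 2*k) (by omega) (x := v.val + k) (by omega) with ⟨b1,b2⟩|⟨b2,b1⟩ <;> omega
  · have e := congrArg Fin.val h
    rw [sh_val] at e
    refine ⟨?_, e⟩
    rcases modc (q := 2*k) (by omega) (x := u.val + k) (by omega) with ⟨a1,a2⟩|⟨a2,a1⟩ <;>
      rcases modc (q := 2*k) (by omega) (x := v.val + k) (by omega) with ⟨b1,b2⟩|⟨b2,b1⟩ <;> omega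

def PW : ∀ ⦃u v : Fin (2*k)⦄, (HH k hk).Adj u v → (GG k).Walk (fEmb k u) (fEmb k v) :=
  fun u v h =>
  if h1 : v = sh k hk u 1 then
    (walkCyc k u.val u.isLt).copy (Fin.ext rfl)
      (by apply Fin.ext; show (u.val+1) % (2*k) = v.val; rw [h1]; rfl)
  else if h2 : u = sh k hk v 1 then
    ((walkCyc k v.val v.isLt).copy (Fin.ext (b := fEmb k v) rfl)
      (by apply Fin.ext; show (v.val+1) % (2*k) = u.val; rw [h2]; rfl)).reverse
  else if h3 : u.val < k then
    (walkChord k u.val h3).copy (Fin.ext rfl)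
      (by apply Fin.ext; show u.val + k = v.val
          have := (fact_chord hk h h1 h2).1
          rw [this, Nat.mod_eq_of_lt (by omega)])
  else
    ((walkChord k v.val (by
        have hv := v.isLt; have hu := u.isLt
        have := (fact_chord hk h h1 h2).1
        rcases modc (q := 2*k) (by omega) (x := u.val + k) (by omega) with ⟨a1,a2⟩|⟨a2,a1⟩ <;> omega)).copy (Fin.ext (b := fEmb k v) rfl)
      (by apply Fin.ext; show v.val + k = u.val
          have := (fact_chord hk h h1 h2).2
          have hv := v.isLt; have hu := u.isLt
          have hkk := (fact_chord hk h h1 h2).1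
          rcases modc (q := 2*k) (by omega) (x := u.val + k) (by omega) with ⟨a1,a2⟩|⟨a2,a1⟩ <;>
            rcases modc (q := 2*k) (by omega) (x := v.val + k) (by omega) with ⟨b1,b2⟩|⟨b2,b1⟩ <;> omega)).reverse

end G

section G2a
variable {k : ℕ}

lemma excl12 (hk : 5 ≤ k) {u v : Fin (2*k)} (h1 : v = sh k hk u 1) (h2 : u = sh k hk v 1) : False := by
  have hu := u.isLt; have hv := v.isLt
  have e1 := congrArg Fin.val h1
  have e2 := congrArg Fin.val h2
  rw [sh_val] at e1 e2
  rcases modc (q := 2*k) (by omega) (x := u.val + 1) (by omega) with ⟨a1,a2⟩|⟨a2,a1⟩ <;>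
    rcases modc (q := 2*k) (by omega) (x := v.val + 1) (by omega) with ⟨b1,b2⟩|⟨b2,b1⟩ <;> omega

lemma walkCyc_support (i : ℕ) (h : i < 2*k) :
    (walkCyc k i h).support = [vA k i h, vB k i h, vC k i h, vD k i h] := rfl

lemma walkCyc_edges (i : ℕ) (h : i < 2*k) :
    (walkCyc k i h).edges =
      [s(vA k i h, vB k i h), s(vB k i h, vC k i h), s(vC k i h, vD k i h)] := rfl

lemma walkChord_support (j : ℕ) (h : j < k) :
    (walkChord k j h).support = [vA k j (by omega), wB k j h, wC k j h, wD k j h] := rfl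

lemma walkChord_edges (j : ℕ) (h : j < k) :
    (walkChord k j h).edges =
      [s(vA k j (by omega), wB k j h), s(wB k j h, wC k j h), s(wC k j h, wD k j h)] := rfl

lemma walkCyc_isPath (i : ℕ) (h : i < 2*k) : (walkCyc k i h).IsPath := by
  have hm := Nat.mod_lt (i+1) (show 0 < 2*k by omega)
  rw [SimpleGraph.Walk.isPath_def, walkCyc_support]
  simp only [List.nodup_cons, List.mem_cons, List.mem_singleton, List.not_mem_nil,
    or_false, List.nodup_nil, and_true, not_or, List.nodup_cons]
  simp only [vA, vB, vC, vD, Ne, Fin.mk.injEq]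
  refine ⟨⟨?_, ?_, ?_⟩, ⟨?_, ?_⟩, ?_, not_false⟩ <;>
    (rcases modc (q := 2*k) (by omega) (x := i+1) (by omega) with ⟨a1,a2⟩|⟨a2,a1⟩ <;> omega)

lemma walkChord_isPath (j : ℕ) (h : j < k) : (walkChord k j h).IsPath := by
  rw [SimpleGraph.Walk.isPath_def, walkChord_support]
  simp only [List.nodup_cons, List.mem_cons, List.mem_singleton, List.not_mem_nil,
    or_false, List.nodup_nil, and_true, not_or, List.nodup_cons]
  simp only [vA, wB, wC, wD, Ne, Fin.mk.injEq]
  refine ⟨⟨?_, ?_, ?_⟩, ⟨?_, ?_⟩, ?_, not_false⟩ <;> omega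

end G2a

section G2
variable {k : ℕ} (hk : 5 ≤ k)

lemma cond1 : ∀ u v (h : (HH k hk).Adj u v), (PW hk h).IsPath := by
  intro u v h
  unfold PW
  split_ifs with h1 h2 h3
  · rw [SimpleGraph.Walk.isPath_copy]; exact walkCyc_isPath _ _
  · apply SimpleGraph.Walk.IsPath.reverse
    rw [SimpleGraph.Walk.isPath_copy]; exact walkCyc_isPath _ _
  · rw [SimpleGraph.Walk.isPath_copy]; exact walkChord_isPath _ _
  · apply SimpleGraph.Walk.IsPath.reverse
    rw [SimpleGraph.Walk.isPath_copy]; exact walkChord_isPath _ _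

lemma notlt_of_chord {u v : Fin (2*k)} (h : (HH k hk).Adj u v)
    (h1 : ¬ v = sh k hk u 1) (h2 : ¬ u = sh k hk v 1) (h3 : u.val < k) :
    ¬ v.val < k := by
  have fc := (fact_chord hk h h1 h2).1
  have hu := u.isLt
  rw [Nat.mod_eq_of_lt (by omega)] at fc
  omega

lemma lt_of_chord {u v : Fin (2*k)} (h : (HH k hk).Adj u v)
    (h1 : ¬ v = sh k hk u 1) (h2 : ¬ u = sh k hk v 1) (h3 : ¬ u.val < k) :
    v.val < k := by
  have fc := (fact_chord hk h h1 h2).1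
  have hu := u.isLt
  rcases modc (q := 2*k) (by omega) (x := u.val + k) (by omega) with ⟨a1,a2⟩|⟨a2,a1⟩ <;> omega

lemma cond2 : ∀ u v (h : (HH k hk).Adj u v), PW hk h.symm = (PW hk h).reverse := by
  intro u v h
  unfold PW
  by_cases h1 : v = sh k hk u 1
  · have h2 : ¬ u = sh k hk v 1 := fun h2 => excl12 hk h1 h2
    rw [dif_neg h2, dif_pos h1, dif_pos h1]
  · by_cases h2 : u = sh k hk v 1
    · rw [dif_pos h2, dif_neg h1, dif_pos h2, SimpleGraph.Walk.reverse_reverse]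
    · by_cases h3 : u.val < k
      · have h3' := notlt_of_chord hk h h1 h2 h3
        rw [dif_neg h2, dif_neg h1, dif_neg h3', dif_neg h1, dif_neg h2, dif_pos h3]
      · have h3' := lt_of_chord hk h h1 h2 h3
        rw [dif_neg h2, dif_neg h1, dif_pos h3', dif_neg h1, dif_neg h2, dif_neg h3,
          SimpleGraph.Walk.reverse_reverse]

lemma PW_support_mem (u v : Fin (2*k)) (h : (HH k hk).Adj u v) :
    ∀ x ∈ (PW hk h).support, x = fEmb k u ∨ x = fEmb k v ∨ 2*k ≤ x.val := by
  intro x hx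
  have hu := u.isLt; have hv := v.isLt
  unfold PW at hx
  split_ifs at hx with h1 h2 h3
  · rw [SimpleGraph.Walk.support_copy, walkCyc_support] at hx
    have e1 := congrArg Fin.val h1; rw [sh_val] at e1
    simp only [List.mem_cons, List.mem_singleton, List.not_mem_nil, or_false] at hx
    rcases hx with h'|h'|h'|h'
    · exact Or.inl (by rw [h']; exact Fin.ext rfl)
    · right; right; rw [h']; show 2*k ≤ 2*k+2*u.val; omega
    · right; right; rw [h']; show 2*k ≤ 2*k+2*u.val+1; omega
    · right; left; rw [h']; apply Fin.ext; show (u.val+1) % (2*k) = v.val; omega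
  · rw [SimpleGraph.Walk.support_reverse, SimpleGraph.Walk.support_copy, walkCyc_support] at hx
    have e1 := congrArg Fin.val h2; rw [sh_val] at e1
    simp only [List.mem_reverse, List.mem_cons, List.mem_singleton, List.not_mem_nil, or_false] at hx
    rcases hx with h'|h'|h'|h'
    · right; left; exact (by rw [h']; exact Fin.ext rfl)
    · right; right; rw [h']; show 2*k ≤ 2*k+2*v.val; omega
    · right; right; rw [h']; show 2*k ≤ 2*k+2*v.val+1; omega
    · left; rw [h']; apply Fin.ext; show (v.val+1) % (2*k) = u.val; omega
  · rw [SimpleGraph.Walk.support_copy, walkChord_support] at hx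
    have fc := (fact_chord hk h h1 h2).1
    rw [Nat.mod_eq_of_lt (by omega)] at fc
    simp only [List.mem_cons, List.mem_singleton, List.not_mem_nil, or_false] at hx
    rcases hx with h'|h'|h'|h'
    · exact Or.inl (by rw [h']; exact Fin.ext rfl)
    · right; right; rw [h']; show 2*k ≤ 6*k+2*u.val; omega
    · right; right; rw [h']; show 2*k ≤ 6*k+2*u.val+1; omega
    · right; left; rw [h']; apply Fin.ext; show u.val + k = v.val; omega
  · rw [SimpleGraph.Walk.support_reverse, SimpleGraph.Walk.support_copy, walkChord_support] at hx
    have h3' := lt_of_chord hk h h1 h2 h3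
    have fc := (fact_chord hk h h1 h2).2
    rw [Nat.mod_eq_of_lt (by omega)] at fc
    simp only [List.mem_reverse, List.mem_cons, List.mem_singleton, List.not_mem_nil, or_false] at hx
    rcases hx with h'|h'|h'|h'
    · right; left; exact (by rw [h']; exact Fin.ext rfl)
    · right; right; rw [h']; show 2*k ≤ 6*k+2*v.val; omega
    · right; right; rw [h']; show 2*k ≤ 6*k+2*v.val+1; omega
    · left; rw [h']; apply Fin.ext; show v.val + k = u.val; omega

end G2

section G3
variable {k : ℕ} (hk : 5 ≤ k)

lemma cond3 : ∀ u v (h : (HH k hk).Adj u v), ∀ x ∈ (PW hk h).support,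
    x ∈ Set.range (fEmb k) → x = fEmb k u ∨ x = fEmb k v := by
  intro u v h x hx hr
  rcases PW_support_mem hk u v h x hx with h'|h'|h'
  · exact Or.inl h'
  · exact Or.inr h'
  · obtain ⟨a, rfl⟩ := hr
    have := a.isLt
    exact absurd h' (by simp only [fEmb]; omega)

lemma PW_internal (u v : Fin (2*k)) (h : (HH k hk).Adj u v) (x : Fin (8*k))
    (hx : x ∈ (PW hk h).support) (hxv : 2*k ≤ x.val) :
    ∃ i, (i < 2*k ∧ (x.val = 2*k+2*i ∨ x.val = 2*k+2*i+1) ∧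
           ((u.val = i ∧ v.val = (i+1) % (2*k)) ∨ (v.val = i ∧ u.val = (i+1) % (2*k)))) ∨
         (i < k ∧ (x.val = 6*k+2*i ∨ x.val = 6*k+2*i+1) ∧
           ((u.val = i ∧ v.val = i + k) ∨ (v.val = i ∧ u.val = i + k))) := by
  have hu := u.isLt; have hv := v.isLt
  unfold PW at hx
  split_ifs at hx with h1 h2 h3
  · rw [SimpleGraph.Walk.support_copy, walkCyc_support] at hx
    have e1 := congrArg Fin.val h1; rw [sh_val] at e1
    simp only [List.mem_cons, List.mem_singleton, List.not_mem_nil, or_false] at hx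
    refine ⟨u.val, Or.inl ⟨hu, ?_, Or.inl ⟨rfl, e1⟩⟩⟩
    rcases hx with h'|h'|h'|h' <;> rw [h'] at hxv ⊢ <;>
      first
      | (exfalso; revert hxv; show ¬ (2*k ≤ u.val); omega)
      | (exfalso; revert hxv;
         have hm := Nat.mod_lt (u.val+1) (show 0 < 2*k by omega)
         show ¬ (2*k ≤ (u.val+1) % (2*k)); omega)
      | (left; rfl)
      | (right; rfl)
  · rw [SimpleGraph.Walk.support_reverse, SimpleGraph.Walk.support_copy, walkCyc_support] at hx
    have e1 := congrArg Fin.val h2; rw [sh_val] at e1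
    simp only [List.mem_reverse, List.mem_cons, List.mem_singleton, List.not_mem_nil, or_false] at hx
    refine ⟨v.val, Or.inl ⟨hv, ?_, Or.inr ⟨rfl, e1⟩⟩⟩
    rcases hx with h'|h'|h'|h' <;> rw [h'] at hxv ⊢ <;>
      first
      | (exfalso; revert hxv; show ¬ (2*k ≤ v.val); omega)
      | (exfalso; revert hxv;
         have hm := Nat.mod_lt (v.val+1) (show 0 < 2*k by omega)
         show ¬ (2*k ≤ (v.val+1) % (2*k)); omega)
      | (left; rfl)
      | (right; rfl)
  · rw [SimpleGraph.Walk.support_copy, walkChord_support] at hx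
    have fc := (fact_chord hk h h1 h2).1
    rw [Nat.mod_eq_of_lt (by omega)] at fc
    simp only [List.mem_cons, List.mem_singleton, List.not_mem_nil, or_false] at hx
    refine ⟨u.val, Or.inr ⟨h3, ?_, Or.inl ⟨rfl, fc⟩⟩⟩
    rcases hx with h'|h'|h'|h' <;> rw [h'] at hxv ⊢ <;>
      first
      | (exfalso; revert hxv; show ¬ (2*k ≤ u.val); omega)
      | (exfalso; revert hxv; show ¬ (2*k ≤ u.val + k); omega)
      | (left; rfl)
      | (right; rfl)
  · rw [SimpleGraph.Walk.support_reverse, SimpleGraph.Walk.support_copy, walkChord_support] at hx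
    have h3' := lt_of_chord hk h h1 h2 h3
    have fc := (fact_chord hk h h1 h2).2
    rw [Nat.mod_eq_of_lt (by omega)] at fc
    simp only [List.mem_reverse, List.mem_cons, List.mem_singleton, List.not_mem_nil, or_false] at hx
    refine ⟨v.val, Or.inr ⟨h3', ?_, Or.inr ⟨rfl, fc⟩⟩⟩
    rcases hx with h'|h'|h'|h' <;> rw [h'] at hxv ⊢ <;>
      first
      | (exfalso; revert hxv; show ¬ (2*k ≤ v.val); omega)
      | (exfalso; revert hxv; show ¬ (2*k ≤ v.val + k); omega)
      | (left; rfl)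
      | (right; rfl)

lemma cond4 : ∀ u v (h : (HH k hk).Adj u v), ∀ u' v' (h' : (HH k hk).Adj u' v'),
    s(u, v) ≠ s(u', v') → ∀ x ∈ (PW hk h).support, x ∈ (PW hk h').support →
    x ∈ Set.range (fEmb k) := by
  intro u v h u' v' h' hne x hx hx'
  by_contra hr
  have hxv : 2*k ≤ x.val := by
    rcases PW_support_mem hk u v h x hx with e|e|e
    · exact absurd ⟨u, e.symm⟩ hr
    · exact absurd ⟨v, e.symm⟩ hr
    · exact e
  obtain ⟨i, hi⟩ := PW_internal hk u v h x hx hxv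
  obtain ⟨i', hi'⟩ := PW_internal hk u' v' h' x hx' hxv
  apply hne
  rcases hi with ⟨hlt, hx1, he⟩|⟨hlt, hx1, he⟩ <;> rcases hi' with ⟨hlt', hx2, he'⟩|⟨hlt', hx2, he'⟩
  · have hii : i = i' := by omega
    subst hii
    rcases he with ⟨e1,e2⟩|⟨e1,e2⟩ <;> rcases he' with ⟨e3,e4⟩|⟨e3,e4⟩ <;>
      rw [Fin.ext (e1.trans e3.symm), Fin.ext (e2.trans e4.symm)] <;>
      first | rfl | exact Sym2.eq_swap
  · exfalso; omega
  · exfalso; omega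
  · have hii : i = i' := by omega
    subst hii
    rcases he with ⟨e1,e2⟩|⟨e1,e2⟩ <;> rcases he' with ⟨e3,e4⟩|⟨e3,e4⟩ <;>
      rw [Fin.ext (e1.trans e3.symm), Fin.ext (e2.trans e4.symm)] <;>
      first | rfl | exact Sym2.eq_swap

end G3

section G4
variable {k : ℕ} (hk : 5 ≤ k)

lemma cyc_cond1 (i : ℕ) (h : i < 2*k) : hD k i h = sh k hk (hA k i h) 1 := rfl

lemma PW_cyc_support (i : ℕ) (h : i < 2*k) :
    (PW hk (adj_cyc hk i h)).support = [vA k i h, vB k i h, vC k i h, vD k i h] := by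
  unfold PW
  rw [dif_pos (cyc_cond1 hk i h)]
  rw [SimpleGraph.Walk.support_copy, walkCyc_support]
  rfl

lemma PW_cyc_edges (i : ℕ) (h : i < 2*k) :
    (PW hk (adj_cyc hk i h)).edges =
      [s(vA k i h, vB k i h), s(vB k i h, vC k i h), s(vC k i h, vD k i h)] := by
  unfold PW
  rw [dif_pos (cyc_cond1 hk i h)]
  rw [SimpleGraph.Walk.edges_copy, walkCyc_edges]
  rfl

lemma chord_cond1 (j : ℕ) (hj : j < k) :
    ¬ (hDk k j hj = sh k hk (hA k j (by omega)) 1) := by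
  intro e
  have e1 := congrArg Fin.val e
  rw [sh_val] at e1
  rw [Nat.mod_eq_of_lt (show (hA k j (by omega)).val + 1 < 2*k by show j + 1 < 2*k; omega)] at e1
  revert e1; show ¬ (j + k = j + 1); omega

lemma chord_cond2 (j : ℕ) (hj : j < k) :
    ¬ (hA k j (by omega) = sh k hk (hDk k j hj) 1) := by
  intro e
  have e1 := congrArg Fin.val e
  rw [sh_val] at e1
  have e2 : j = (j + k + 1) % (2*k) := e1
  rcases modc (q := 2*k) (by omega) (x := j + k + 1) (by omega) with ⟨a1,a2⟩|⟨a2,a1⟩ <;> omega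

lemma PW_chord_support (j : ℕ) (hj : j < k) :
    (PW hk (adj_chord hk j hj)).support =
      [vA k j (by omega), wB k j hj, wC k j hj, wD k j hj] := by
  unfold PW
  have hj' : (hA k j (by omega : j < 2*k)).val < k := hj
  rw [dif_neg (chord_cond1 hk j hj), dif_neg (chord_cond2 hk j hj), dif_pos hj']
  rw [SimpleGraph.Walk.support_copy, walkChord_support]
  rfl

lemma PW_chord_edges (j : ℕ) (hj : j < k) :
    (PW hk (adj_chord hk j hj)).edges =
      [s(vA k j (by omega), wB k j hj), s(wB k j hj, wC k j hj), s(wC k j hj, wD k j hj)] := by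
  unfold PW
  have hj' : (hA k j (by omega : j < 2*k)).val < k := hj
  rw [dif_neg (chord_cond1 hk j hj), dif_neg (chord_cond2 hk j hj), dif_pos hj']
  rw [SimpleGraph.Walk.edges_copy, walkChord_edges]
  rfl

lemma cond5 : ∀ x : Fin (8*k), x ∈ Set.range (fEmb k) ∨
    ∃ (u v : Fin (2*k)) (h : (HH k hk).Adj u v), x ∈ (PW hk h).support := by
  intro x
  have hx8 := x.isLt
  by_cases hx : x.val < 2*k
  · exact Or.inl ⟨⟨x.val, hx⟩, Fin.ext rfl⟩
  · right
    by_cases hx6 : x.val < 6*k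
    · set i := (x.val - 2*k)/2 with hidef
      have hi : i < 2*k := by omega
      refine ⟨hA k i hi, hD k i hi, adj_cyc hk i hi, ?_⟩
      rw [PW_cyc_support]
      by_cases hpar : (x.val - 2*k) % 2 = 0
      · have hxe : x = vB k i hi := Fin.ext (by show x.val = 2*k+2*i; omega)
        rw [hxe]; simp
      · have hxe : x = vC k i hi := Fin.ext (by show x.val = 2*k+2*i+1; omega)
        rw [hxe]; simp
    · set j := (x.val - 6*k)/2 with hjdef
      have hj : j < k := by omega
      refine ⟨hA k j (by omega), hDk k j hj, adj_chord hk j hj, ?_⟩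
      rw [PW_chord_support]
      by_cases hpar : (x.val - 6*k) % 2 = 0
      · have hxe : x = wB k j hj := Fin.ext (by show x.val = 6*k+2*j; omega)
        rw [hxe]; simp
      · have hxe : x = wC k j hj := Fin.ext (by show x.val = 6*k+2*j+1; omega)
        rw [hxe]; simp

lemma cond6core (a b : Fin (8*k)) (hr : gRel k a.val b.val) :
    ∃ (u v : Fin (2*k)) (h : (HH k hk).Adj u v), s(a,b) ∈ (PW hk h).edges := by
  rcases hr with ⟨i,hi,e1,e2⟩|⟨i,hi,e1,e2⟩|⟨i,hi,e1,e2⟩|⟨i,hi,e1,e2⟩|⟨i,hi,e1,e2⟩|⟨i,hi,e1,e2⟩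
  · refine ⟨hA k i hi, hD k i hi, adj_cyc hk i hi, ?_⟩
    rw [PW_cyc_edges, show a = vA k i hi from Fin.ext e1, show b = vB k i hi from Fin.ext e2]
    simp
  · refine ⟨hA k i hi, hD k i hi, adj_cyc hk i hi, ?_⟩
    rw [PW_cyc_edges, show a = vB k i hi from Fin.ext e1, show b = vC k i hi from Fin.ext e2]
    simp
  · refine ⟨hA k i hi, hD k i hi, adj_cyc hk i hi, ?_⟩
    rw [PW_cyc_edges, show a = vC k i hi from Fin.ext e1, show b = vD k i hi from Fin.ext e2]
    simp
  · refine ⟨hA k i (by omega), hDk k i hi, adj_chord hk i hi, ?_⟩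
    rw [PW_chord_edges, show a = vA k i (by omega) from Fin.ext e1,
      show b = wB k i hi from Fin.ext e2]
    simp
  · refine ⟨hA k i (by omega), hDk k i hi, adj_chord hk i hi, ?_⟩
    rw [PW_chord_edges, show a = wB k i hi from Fin.ext e1, show b = wC k i hi from Fin.ext e2]
    simp
  · refine ⟨hA k i (by omega), hDk k i hi, adj_chord hk i hi, ?_⟩
    rw [PW_chord_edges, show a = wC k i hi from Fin.ext e1, show b = wD k i hi from Fin.ext e2]
    simp

lemma cond6 : ∀ e ∈ (GG k).edgeSet, ∃ (u v : Fin (2*k)) (h : (HH k hk).Adj u v), e ∈ (PW hk h).edges := by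
  intro e
  induction e using Sym2.ind with
  | _ a b =>
  intro he
  rw [SimpleGraph.mem_edgeSet] at he
  rcases he with hr|hr
  · exact cond6core hk a b hr
  · obtain ⟨u, v, h, hm⟩ := cond6core hk b a hr
    exact ⟨u, v, h, by rwa [Sym2.eq_swap]⟩

lemma subdivGH : IsSubdivision (GG k) (HH k hk) :=
  ⟨fEmb k, fEmb_inj k, PW hk, cond1 hk, cond2 hk, cond3 hk, cond4 hk, cond5 hk, cond6 hk⟩

end G4

section G5
variable {k : ℕ} (hk : 5 ≤ k)

lemma adj_cs_even {b z : Fin (8*k)} (i : ℕ) (hi : i < 2*k) (hb : b.val = 2*k+2*i) :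
    (GG k).Adj b z ↔ (z = vA k i hi ∨ z = vC k i hi) := by
  constructor
  · rintro ((⟨i',hi',e1,e2⟩|⟨i',hi',e1,e2⟩|⟨i',hi',e1,e2⟩|⟨i',hi',e1,e2⟩|⟨i',hi',e1,e2⟩|⟨i',hi',e1,e2⟩)|(⟨i',hi',e1,e2⟩|⟨i',hi',e1,e2⟩|⟨i',hi',e1,e2⟩|⟨i',hi',e1,e2⟩|⟨i',hi',e1,e2⟩|⟨i',hi',e1,e2⟩))
    · exfalso; omega
    · right; apply Fin.ext; show z.val = 2*k+2*i+1; omega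
    · exfalso; omega
    · exfalso; omega
    · exfalso; omega
    · exfalso; omega
    · left; apply Fin.ext; show z.val = i; omega
    · exfalso; omega
    · exfalso; have hm := Nat.mod_lt (i'+1) (show 0 < 2*k by omega); omega
    · exfalso; omega
    · exfalso; omega
    · exfalso; omega
  · rintro (rfl|rfl)
    · exact Or.inr (Or.inl ⟨i, hi, rfl, hb⟩)
    · exact Or.inl (Or.inr (Or.inl ⟨i, hi, hb, rfl⟩))

lemma adj_cs_odd {b z : Fin (8*k)} (i : ℕ) (hi : i < 2*k) (hb : b.val = 2*k+2*i+1) :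
    (GG k).Adj b z ↔ (z = vB k i hi ∨ z = vD k i hi) := by
  constructor
  · rintro ((⟨i',hi',e1,e2⟩|⟨i',hi',e1,e2⟩|⟨i',hi',e1,e2⟩|⟨i',hi',e1,e2⟩|⟨i',hi',e1,e2⟩|⟨i',hi',e1,e2⟩)|(⟨i',hi',e1,e2⟩|⟨i',hi',e1,e2⟩|⟨i',hi',e1,e2⟩|⟨i',hi',e1,e2⟩|⟨i',hi',e1,e2⟩|⟨i',hi',e1,e2⟩))
    · exfalso; omega
    · exfalso; omega
    · right; apply Fin.ext; show z.val = (i+1) % (2*k)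
      have hii : i' = i := by omega
      subst hii; omega
    · exfalso; omega
    · exfalso; omega
    · exfalso; omega
    · exfalso; omega
    · left; apply Fin.ext; show z.val = 2*k+2*i; omega
    · exfalso; have hm := Nat.mod_lt (i'+1) (show 0 < 2*k by omega); omega
    · exfalso; omega
    · exfalso; omega
    · exfalso; omega
  · rintro (rfl|rfl)
    · exact Or.inr (Or.inr (Or.inl ⟨i, hi, rfl, hb⟩))
    · exact Or.inl (Or.inr (Or.inr (Or.inl ⟨i, hi, hb, rfl⟩)))

lemma adj_ws_even {b z : Fin (8*k)} (j : ℕ) (hj : j < k) (hb : b.val = 6*k+2*j) :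
    (GG k).Adj b z ↔ (z = vA k j (by omega) ∨ z = wC k j hj) := by
  constructor
  · rintro ((⟨i',hi',e1,e2⟩|⟨i',hi',e1,e2⟩|⟨i',hi',e1,e2⟩|⟨i',hi',e1,e2⟩|⟨i',hi',e1,e2⟩|⟨i',hi',e1,e2⟩)|(⟨i',hi',e1,e2⟩|⟨i',hi',e1,e2⟩|⟨i',hi',e1,e2⟩|⟨i',hi',e1,e2⟩|⟨i',hi',e1,e2⟩|⟨i',hi',e1,e2⟩))
    · exfalso; omega
    · exfalso; omega
    · exfalso; omega
    · exfalso; omega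
    · right; apply Fin.ext; show z.val = 6*k+2*j+1; omega
    · exfalso; omega
    · exfalso; omega
    · exfalso; omega
    · exfalso; have hm := Nat.mod_lt (i'+1) (show 0 < 2*k by omega); omega
    · left; apply Fin.ext; show z.val = j; omega
    · exfalso; omega
    · exfalso; omega
  · rintro (rfl|rfl)
    · exact Or.inr (Or.inr (Or.inr (Or.inr (Or.inl ⟨j, hj, rfl, hb⟩))))
    · exact Or.inl (Or.inr (Or.inr (Or.inr (Or.inr (Or.inl ⟨j, hj, hb, rfl⟩)))))

lemma adj_ws_odd {b z : Fin (8*k)} (j : ℕ) (hj : j < k) (hb : b.val = 6*k+2*j+1) :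
    (GG k).Adj b z ↔ (z = wB k j hj ∨ z = wD k j hj) := by
  constructor
  · rintro ((⟨i',hi',e1,e2⟩|⟨i',hi',e1,e2⟩|⟨i',hi',e1,e2⟩|⟨i',hi',e1,e2⟩|⟨i',hi',e1,e2⟩|⟨i',hi',e1,e2⟩)|(⟨i',hi',e1,e2⟩|⟨i',hi',e1,e2⟩|⟨i',hi',e1,e2⟩|⟨i',hi',e1,e2⟩|⟨i',hi',e1,e2⟩|⟨i',hi',e1,e2⟩))
    · exfalso; omega
    · exfalso; omega
    · exfalso; omega
    · exfalso; omega
    · exfalso; omega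
    · right; apply Fin.ext; show z.val = j + k; omega
    · exfalso; omega
    · exfalso; omega
    · exfalso; have hm := Nat.mod_lt (i'+1) (show 0 < 2*k by omega); omega
    · exfalso; omega
    · left; apply Fin.ext; show z.val = 6*k+2*j; omega
    · exfalso; omega
  · rintro (rfl|rfl)
    · exact Or.inr (Or.inr (Or.inr (Or.inr (Or.inr (Or.inl ⟨j, hj, rfl, hb⟩)))))
    · exact Or.inl (Or.inr (Or.inr (Or.inr (Or.inr (Or.inr ⟨j, hj, hb, rfl⟩)))))

end G5

section G6
variable {k : ℕ} (hk : 5 ≤ k)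

lemma adj_branch_lo {b z : Fin (8*k)} (i : ℕ) (hi : i < k) (hb : b.val = i) :
    (GG k).Adj b z ↔ (z = vB k i (by omega) ∨
      z = vC k ((i + 2*k - 1) % (2*k)) (Nat.mod_lt _ (by omega)) ∨ z = wB k i hi) := by
  constructor
  · rintro ((⟨i',hi',e1,e2⟩|⟨i',hi',e1,e2⟩|⟨i',hi',e1,e2⟩|⟨i',hi',e1,e2⟩|⟨i',hi',e1,e2⟩|⟨i',hi',e1,e2⟩)|(⟨i',hi',e1,e2⟩|⟨i',hi',e1,e2⟩|⟨i',hi',e1,e2⟩|⟨i',hi',e1,e2⟩|⟨i',hi',e1,e2⟩|⟨i',hi',e1,e2⟩))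
    · left; apply Fin.ext; show z.val = 2*k+2*i; omega
    · exfalso; omega
    · exfalso; omega
    · right; right; apply Fin.ext; show z.val = 6*k+2*i; omega
    · exfalso; omega
    · exfalso; omega
    · exfalso; omega
    · exfalso; omega
    · right; left; apply Fin.ext
      show z.val = 2*k + 2*((i + 2*k - 1) % (2*k)) + 1
      rcases modc (q := 2*k) (by omega) (x := i'+1) (by omega) with ⟨a1,a2⟩|⟨a2,a1⟩ <;>
        rcases modc (q := 2*k) (by omega) (x := i+2*k-1) (by omega) with ⟨b1,b2⟩|⟨b2,b1⟩ <;> omega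
    · exfalso; omega
    · exfalso; omega
    · exfalso; omega
  · rintro (rfl|rfl|rfl)
    · exact Or.inl (Or.inl ⟨i, by omega, hb, rfl⟩)
    · refine Or.inr (Or.inr (Or.inr (Or.inl ⟨(i + 2*k - 1) % (2*k), Nat.mod_lt _ (by omega), rfl, ?_⟩)))
      rcases modc (q := 2*k) (by omega) (x := i+2*k-1) (by omega) with ⟨b1,b2⟩|⟨b2,b1⟩ <;> rw [b1]
      · rw [show i+2*k-1+1 = 2*k by omega, Nat.mod_self]; omega
      · rw [show i+2*k-1-(2*k)+1 = i by omega, Nat.mod_eq_of_lt (by omega)]; exact hb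
    · exact Or.inl (Or.inr (Or.inr (Or.inr (Or.inl ⟨i, hi, hb, rfl⟩))))

lemma adj_branch_hi {b z : Fin (8*k)} (i : ℕ) (hik : k ≤ i) (hi : i < 2*k) (hb : b.val = i) :
    (GG k).Adj b z ↔ (z = vB k i hi ∨
      z = vC k ((i + 2*k - 1) % (2*k)) (Nat.mod_lt _ (by omega)) ∨ z = wC k (i-k) (by omega)) := by
  constructor
  · rintro ((⟨i',hi',e1,e2⟩|⟨i',hi',e1,e2⟩|⟨i',hi',e1,e2⟩|⟨i',hi',e1,e2⟩|⟨i',hi',e1,e2⟩|⟨i',hi',e1,e2⟩)|(⟨i',hi',e1,e2⟩|⟨i',hi',e1,e2⟩|⟨i',hi',e1,e2⟩|⟨i',hi',e1,e2⟩|⟨i',hi',e1,e2⟩|⟨i',hi',e1,e2⟩))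
    · left; apply Fin.ext; show z.val = 2*k+2*i; omega
    · exfalso; omega
    · exfalso; omega
    · exfalso; omega
    · exfalso; omega
    · exfalso; omega
    · exfalso; omega
    · exfalso; omega
    · right; left; apply Fin.ext
      show z.val = 2*k + 2*((i + 2*k - 1) % (2*k)) + 1
      rcases modc (q := 2*k) (by omega) (x := i'+1) (by omega) with ⟨a1,a2⟩|⟨a2,a1⟩ <;>
        rcases modc (q := 2*k) (by omega) (x := i+2*k-1) (by omega) with ⟨b1,b2⟩|⟨b2,b1⟩ <;> omega
    · exfalso; omega
    · exfalso; omega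
    · right; right; apply Fin.ext; show z.val = 6*k+2*(i-k)+1; omega
  · rintro (rfl|rfl|rfl)
    · exact Or.inl (Or.inl ⟨i, hi, hb, rfl⟩)
    · refine Or.inr (Or.inr (Or.inr (Or.inl ⟨(i + 2*k - 1) % (2*k), Nat.mod_lt _ (by omega), rfl, ?_⟩)))
      rcases modc (q := 2*k) (by omega) (x := i+2*k-1) (by omega) with ⟨b1,b2⟩|⟨b2,b1⟩ <;> rw [b1]
      · rw [show i+2*k-1+1 = 2*k by omega, Nat.mod_self]; omega
      · rw [show i+2*k-1-(2*k)+1 = i by omega, Nat.mod_eq_of_lt (by omega)]; exact hb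
    · exact Or.inr (Or.inr (Or.inr (Or.inr (Or.inr (Or.inr ⟨i-k, by omega, rfl, by omega⟩)))))

lemma degreesGG (hk : 5 ≤ k) (v : Fin (8*k)) :
    ((GG k).neighborSet v).ncard = 2 ∨ ((GG k).neighborSet v).ncard = 3 := by
  have hv := v.isLt
  by_cases h2 : v.val < 2*k
  · right
    have hp := Nat.mod_lt (v.val + 2*k - 1) (show 0 < 2*k by omega)
    by_cases hlo : v.val < k
    · have hset : (GG k).neighborSet v = {vB k v.val (by omega),
          vC k ((v.val + 2*k - 1) % (2*k)) (Nat.mod_lt _ (by omega)), wB k v.val hlo} := by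
        ext z
        rw [mem_neighborSet, adj_branch_lo hk v.val hlo rfl]
        simp [Set.mem_insert_iff]
      rw [hset, Set.ncard_eq_three]
      refine ⟨_, _, _, ?_, ?_, ?_, rfl⟩
      · intro e; have := congrArg Fin.val e
        revert this; show ¬ (2*k+2*v.val = 2*k + 2*((v.val + 2*k - 1) % (2*k)) + 1); omega
      · intro e; have := congrArg Fin.val e
        revert this; show ¬ (2*k+2*v.val = 6*k+2*v.val); omega
      · intro e; have := congrArg Fin.val e
        revert this; show ¬ (2*k + 2*((v.val + 2*k - 1) % (2*k)) + 1 = 6*k+2*v.val); omega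
    · have hset : (GG k).neighborSet v = {vB k v.val (by omega),
          vC k ((v.val + 2*k - 1) % (2*k)) (Nat.mod_lt _ (by omega)), wC k (v.val-k) (by omega)} := by
        ext z
        rw [mem_neighborSet, adj_branch_hi hk v.val (by omega) (by omega) rfl]
        simp [Set.mem_insert_iff]
      rw [hset, Set.ncard_eq_three]
      refine ⟨_, _, _, ?_, ?_, ?_, rfl⟩
      · intro e; have := congrArg Fin.val e
        revert this; show ¬ (2*k+2*v.val = 2*k + 2*((v.val + 2*k - 1) % (2*k)) + 1); omega
      · intro e; have := congrArg Fin.val e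
        revert this; show ¬ (2*k+2*v.val = 6*k+2*(v.val-k)+1); omega
      · intro e; have := congrArg Fin.val e
        revert this; show ¬ (2*k + 2*((v.val + 2*k - 1) % (2*k)) + 1 = 6*k+2*(v.val-k)+1); omega
  · left
    by_cases h6 : v.val < 6*k
    · set i := (v.val - 2*k)/2 with hidef
      have hi : i < 2*k := by omega
      by_cases hpar : (v.val - 2*k) % 2 = 0
      · have hbv : v.val = 2*k+2*i := by omega
        have hset : (GG k).neighborSet v = {vA k i hi, vC k i hi} := by
          ext z
          rw [mem_neighborSet, adj_cs_even i hi hbv]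
          simp [Set.mem_insert_iff]
        rw [hset]
        refine Set.ncard_pair ?_
        intro e; have e2 := congrArg Fin.val e
        revert e2; show ¬ (i = 2*k+2*i+1); omega
      · have hbv : v.val = 2*k+2*i+1 := by omega
        have hset : (GG k).neighborSet v = {vB k i hi, vD k i hi} := by
          ext z
          rw [mem_neighborSet, adj_cs_odd i hi hbv]
          simp [Set.mem_insert_iff]
        rw [hset]
        refine Set.ncard_pair ?_
        intro e; have e2 := congrArg Fin.val e
        have hm := Nat.mod_lt (i+1) (show 0 < 2*k by omega)
        revert e2; show ¬ (2*k+2*i = (i+1) % (2*k)); omega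
    · set j := (v.val - 6*k)/2 with hjdef
      have hj : j < k := by omega
      by_cases hpar : (v.val - 6*k) % 2 = 0
      · have hbv : v.val = 6*k+2*j := by omega
        have hset : (GG k).neighborSet v = {vA k j (by omega), wC k j hj} := by
          ext z
          rw [mem_neighborSet, adj_ws_even j hj hbv]
          simp [Set.mem_insert_iff]
        rw [hset]
        refine Set.ncard_pair ?_
        intro e; have e2 := congrArg Fin.val e
        revert e2; show ¬ (j = 6*k+2*j+1); omega
      · have hbv : v.val = 6*k+2*j+1 := by omega
        have hset : (GG k).neighborSet v = {wB k j hj, wD k j hj} := by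
          ext z
          rw [mem_neighborSet, adj_ws_odd j hj hbv]
          simp [Set.mem_insert_iff]
        rw [hset]
        refine Set.ncard_pair ?_
        intro e; have e2 := congrArg Fin.val e
        revert e2; show ¬ (6*k+2*j = j+k); omega

end G6

section G7
variable {k : ℕ}

def pkFun (k : ℕ) (i : Fin (2*k)) : Fin (8*k) × Fin (8*k) × Fin (8*k) :=
  (vA k i.val i.isLt, vB k i.val i.isLt, vC k i.val i.isLt)

def PK (k : ℕ) : Finset (Fin (8*k) × Fin (8*k) × Fin (8*k)) :=
  Finset.image (pkFun k) Finset.univ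

lemma pkFun_inj : Function.Injective (pkFun k) := by
  intro i j h
  have h1 : (vA k i.val i.isLt).val = (vA k j.val j.isLt).val :=
    congrArg Fin.val (congrArg Prod.fst h)
  exact Fin.ext h1

lemma PK_card : (PK k).card = 2*k := by
  rw [PK, Finset.card_image_of_injective _ pkFun_inj, Finset.card_univ, Fintype.card_fin]

lemma PK_packing : IsPacking (GG k) (PK k) := by
  constructor
  · intro p hp
    rw [PK, Finset.mem_image] at hp
    obtain ⟨i, -, rfl⟩ := hp
    refine ⟨?_, ?_, ?_, adjAB k i.val i.isLt, adjBC k i.val i.isLt⟩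
    · intro e; have e2 := congrArg Fin.val e; revert e2
      show ¬ (i.val = 2*k+2*i.val); have := i.isLt; omega
    · intro e; have e2 := congrArg Fin.val e; revert e2
      show ¬ (2*k+2*i.val = 2*k+2*i.val+1); omega
    · intro e; have e2 := congrArg Fin.val e; revert e2
      show ¬ (i.val = 2*k+2*i.val+1); omega
  · intro p hp q hq hne
    rw [PK, Finset.mem_image] at hp hq
    obtain ⟨i, -, rfl⟩ := hp
    obtain ⟨j, -, rfl⟩ := hq
    have hij : i.val ≠ j.val := fun e => hne (congrArg (pkFun k) (Fin.ext e))
    rw [Set.disjoint_left]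
    intro a ha hb
    simp only [pVerts, pkFun, Set.mem_insert_iff, Set.mem_singleton_iff, Fin.ext_iff] at ha hb
    have hia := i.isLt; have hja := j.isLt
    simp only [vA, vB, vC] at ha hb
    omega

lemma pathL_branch (hk : 5 ≤ k) (p : Fin (8*k) × Fin (8*k) × Fin (8*k))
    (hp : IsPathL (GG k) p) : p.1.val < 2*k ∨ p.2.1.val < 2*k ∨ p.2.2.val < 2*k := by
  by_contra hcon
  push_neg at hcon
  obtain ⟨hp1, hp2, hp3⟩ := hcon
  obtain ⟨hne1, hne2, hne3, ha1, ha2⟩ := hp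
  set b := p.2.1 with hbdef
  have hb8 := b.isLt
  have hadj1 : (GG k).Adj b p.1 := ha1.symm
  have hadj2 : (GG k).Adj b p.2.2 := ha2
  by_cases h6 : b.val < 6*k
  · set i := (b.val - 2*k)/2 with hidef
    have hi : i < 2*k := by omega
    by_cases hpar : (b.val - 2*k) % 2 = 0
    · have hbv : b.val = 2*k+2*i := by omega
      rw [adj_cs_even i hi hbv] at hadj1 hadj2
      rcases hadj1 with e|e
      · have := congrArg Fin.val e; revert this; show ¬ (p.1.val = i); omega
      · rcases hadj2 with e2|e2
        · have := congrArg Fin.val e2; revert this; show ¬ (p.2.2.val = i); omega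
        · exact hne3 (e.trans e2.symm)
    · have hbv : b.val = 2*k+2*i+1 := by omega
      rw [adj_cs_odd i hi hbv] at hadj1 hadj2
      have hm := Nat.mod_lt (i+1) (show 0 < 2*k by omega)
      rcases hadj1 with e|e
      · rcases hadj2 with e2|e2
        · exact hne3 (e.trans e2.symm)
        · have := congrArg Fin.val e2; revert this; show ¬ (p.2.2.val = (i+1) % (2*k)); omega
      · have := congrArg Fin.val e; revert this; show ¬ (p.1.val = (i+1) % (2*k)); omega
  · set j := (b.val - 6*k)/2 with hjdef
    have hj : j < k := by omega
    by_cases hpar : (b.val - 6*k) % 2 = 0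
    · have hbv : b.val = 6*k+2*j := by omega
      rw [adj_ws_even j hj hbv] at hadj1 hadj2
      rcases hadj1 with e|e
      · have := congrArg Fin.val e; revert this; show ¬ (p.1.val = j); omega
      · rcases hadj2 with e2|e2
        · have := congrArg Fin.val e2; revert this; show ¬ (p.2.2.val = j); omega
        · exact hne3 (e.trans e2.symm)
    · have hbv : b.val = 6*k+2*j+1 := by omega
      rw [adj_ws_odd j hj hbv] at hadj1 hadj2
      rcases hadj1 with e|e
      · rcases hadj2 with e2|e2
        · exact hne3 (e.trans e2.symm)
        · have := congrArg Fin.val e2; revert this; show ¬ (p.2.2.val = j+k); omega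
      · have := congrArg Fin.val e; revert this; show ¬ (p.1.val = j+k); omega

def chooseBr (k : ℕ) (p : Fin (8*k) × Fin (8*k) × Fin (8*k)) : Fin (8*k) :=
  if p.1.val < 2*k then p.1 else if p.2.1.val < 2*k then p.2.1 else p.2.2

lemma chooseBr_mem (p : Fin (8*k) × Fin (8*k) × Fin (8*k)) : chooseBr k p ∈ pVerts p := by
  unfold chooseBr
  split_ifs <;> simp [pVerts]

lemma chooseBr_lt (hk : 5 ≤ k) (p : Fin (8*k) × Fin (8*k) × Fin (8*k))
    (hp : IsPathL (GG k) p) : (chooseBr k p).val < 2*k := by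
  have := pathL_branch hk p hp
  unfold chooseBr
  split_ifs with h1 h2 <;> tauto

lemma packing_le (hk : 5 ≤ k) (P : Finset (Fin (8*k) × Fin (8*k) × Fin (8*k)))
    (hP : IsPacking (GG k) P) : P.card ≤ 2*k := by
  have := Finset.card_le_card_of_injOn
    (f := fun p => if h : (chooseBr k p).val < 2*k then (⟨(chooseBr k p).val, h⟩ : Fin (2*k))
      else ⟨0, by omega⟩)
    (s := P) (t := Finset.univ) (fun a _ => Finset.mem_univ _) ?_
  · rwa [Finset.card_univ, Fintype.card_fin] at this
  · intro p hp q hq he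
    by_contra hne
    have hlp := chooseBr_lt hk p (hP.1 p hp)
    have hlq := chooseBr_lt hk q (hP.1 q hq)
    simp only [] at he
    rw [dif_pos hlp, dif_pos hlq] at he
    have hvv := congrArg Fin.val he
    have hcc : chooseBr k p = chooseBr k q := Fin.ext hvv
    have hdisj := hP.2 p hp q hq hne
    rw [Set.disjoint_left] at hdisj
    exact hdisj (chooseBr_mem p) (hcc ▸ chooseBr_mem q)

lemma lambdaGG (hk : 5 ≤ k) : lambdaNum (GG k) = 2*k := by
  unfold lambdaNum
  apply le_antisymm
  · exact csSup_le ⟨2*k, PK k, PK_packing, PK_card⟩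
      (by rintro n ⟨P, hP, rfl⟩; exact packing_le hk P hP)
  · exact le_csSup ⟨2*k, by rintro n ⟨P, hP, rfl⟩; exact packing_le hk P hP⟩
      ⟨PK k, PK_packing, PK_card⟩

end G7


section G8
variable {k : ℕ}

lemma reach_branch (hk : 5 ≤ k) : ∀ i (h : i < 2*k),
    (GG k).Reachable ⟨i, by omega⟩ ⟨0, by omega⟩ := by
  intro i
  induction i with
  | zero => intro h; rfl
  | succ n ih =>
    intro h
    have hn : n < 2*k := by omega
    have hvd : (⟨n+1, by omega⟩ : Fin (8*k)) = vD k n hn := by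
      apply Fin.ext
      show (n+1) = (n+1) % (2*k)
      rw [Nat.mod_eq_of_lt (by omega)]
    have r1 : (GG k).Reachable (vA k n hn) (vD k n hn) :=
      ((adjAB k n hn).reachable.trans (adjBC k n hn).reachable).trans (adjCD k n hn).reachable
    rw [hvd]
    exact r1.symm.trans (ih hn)

lemma reach0 (hk : 5 ≤ k) (x : Fin (8*k)) : (GG k).Reachable x ⟨0, by omega⟩ := by
  have hx := x.isLt
  by_cases h2 : x.val < 2*k
  · have : x = (⟨x.val, by omega⟩ : Fin (8*k)) := Fin.ext rfl
    rw [this]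
    exact reach_branch hk x.val h2
  · by_cases h6 : x.val < 6*k
    · set i := (x.val - 2*k)/2 with hidef
      have hi : i < 2*k := by omega
      have hA : (vA k i hi) = (⟨i, by omega⟩ : Fin (8*k)) := Fin.ext rfl
      have rA : (GG k).Reachable (vA k i hi) ⟨0, by omega⟩ := by
        rw [hA]; exact reach_branch hk i hi
      by_cases hpar : (x.val - 2*k) % 2 = 0
      · have hxe : x = vB k i hi := Fin.ext (by show x.val = 2*k+2*i; omega)
        rw [hxe]
        exact (adjAB k i hi).symm.reachable.trans rA
      · have hxe : x = vC k i hi := Fin.ext (by show x.val = 2*k+2*i+1; omega)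
        rw [hxe]
        exact ((adjBC k i hi).symm.reachable.trans ((adjAB k i hi).symm.reachable)).trans rA
    · set j := (x.val - 6*k)/2 with hjdef
      have hj : j < k := by omega
      have hA : (vA k j (by omega)) = (⟨j, by omega⟩ : Fin (8*k)) := Fin.ext rfl
      have rA : (GG k).Reachable (vA k j (by omega)) ⟨0, by omega⟩ := by
        rw [hA]; exact reach_branch hk j (by omega)
      by_cases hpar : (x.val - 6*k) % 2 = 0
      · have hxe : x = wB k j hj := Fin.ext (by show x.val = 6*k+2*j; omega)
        rw [hxe]
        exact (adjAB' k j hj).symm.reachable.trans rA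
      · have hxe : x = wC k j hj := Fin.ext (by show x.val = 6*k+2*j+1; omega)
        rw [hxe]
        exact ((adjBC' k j hj).symm.reachable.trans ((adjAB' k j hj).symm.reachable)).trans rA

lemma connGG (hk : 5 ≤ k) : (GG k).Connected := by
  rw [connected_iff]
  exact ⟨fun x y => (reach0 hk x).trans (reach0 hk y).symm, ⟨⟨0, by omega⟩⟩⟩

lemma compGG (hk : 5 ≤ k) (c : (GG k).ConnectedComponent) : c.supp.ncard = 8*k := by
  induction c using SimpleGraph.ConnectedComponent.ind with
  | _ v =>
  have hsupp : ((GG k).connectedComponentMk v).supp = Set.univ := by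
    rw [Set.eq_univ_iff_forall]
    intro w
    rw [SimpleGraph.ConnectedComponent.mem_supp_iff]
    exact SimpleGraph.ConnectedComponent.eq.mpr ((connGG hk).preconnected w v)
  rw [hsupp, Set.ncard_univ, Nat.card_eq_fintype_card, Fintype.card_fin]

end G8


/-- For every `N` there is a connected graph `G` with more than `N` vertices, all degrees
2 or 3, no 5-vertex component, which is a subdivision of a cubic 3-connected graph and
attains the bound `λ(G) = ⌈v(G)/4⌉`. -/
theorem stmt2 (N : ℕ) :
    ∃ (n : ℕ) (G : SimpleGraph (Fin n)),
      N < n ∧ G.Connected ∧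
      (∀ v, (G.neighborSet v).ncard = 2 ∨ (G.neighborSet v).ncard = 3) ∧
      (∀ c : G.ConnectedComponent, c.supp.ncard ≠ 5) ∧
      (∃ (m : ℕ) (H : SimpleGraph (Fin m)), IsCubic H ∧ KConnected 3 H ∧ IsSubdivision G H) ∧
      lambdaNum G = (n + 3) / 4 := by
  set k := N + 5 with hkdef
  have hk : 5 ≤ k := by omega
  refine ⟨8*k, GG k, by omega, connGG hk, degreesGG hk, ?_, ?_, ?_⟩
  · intro c
    rw [compGG hk c]
    omega
  · exact ⟨2*k, HH k hk, cubicH hk, kconnH, subdivGH hk⟩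
  · rw [lambdaGG hk]
    omega
end

section
/- Let A and B be disjoint graphs, a a vertex of A of degree 3 with neighbors a₁,a₂,a₃, b a vertex of B of degree 3 with neighbors b₁,b₂,b₃, and G = AaσbB. Let P be a Λ-factor of G and let P' be the set of paths of P that contain at least one of the edges a₁b₁, a₂b₂, a₃b₃. If v(A) ≡ 0 (mod 3), then exactly one of the following holds: (a1.1) P' consists of exactly one path, which has two vertices in A − a that are adjacent and exactly one vertex in B − b; (a1.2) P' consists of exactly two paths, each having exactly one vertex in A − a and two vertices in B − b that are adjacent; (a1.3) P' consists of exactly three paths, one of which has exactly one vertex in A − a and two adjacent vertices in B − b, while each of the other two has two adjacent vertices in A − a and exactly one vertex in B − b. -/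
open SimpleGraph

/-- The graph `AaσbB`: delete vertices `a` from `A` and `b` from `B`, then join the
neighbors `a₁,a₂,a₃` of `a` to the neighbors `b₁,b₂,b₃` of `b` by the matching
`a₁b₁, a₂b₂, a₃b₃`. -/
def glueV {VA VB : Type*} (A : SimpleGraph VA) (B : SimpleGraph VB) (a : VA) (b : VB)
    (a1 a2 a3 : VA) (b1 b2 b3 : VB) :
    SimpleGraph ({x : VA // x ≠ a} ⊕ {y : VB // y ≠ b}) :=
  SimpleGraph.fromRel fun u v =>
    match u, v with
    | Sum.inl x, Sum.inl y => A.Adj x.1 y.1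
    | Sum.inl x, Sum.inr y =>
        (x.1 = a1 ∧ y.1 = b1) ∨ (x.1 = a2 ∧ y.1 = b2) ∨ (x.1 = a3 ∧ y.1 = b3)
    | Sum.inr x, Sum.inr y => B.Adj x.1 y.1
    | Sum.inr _, Sum.inl _ => False

/-- The path `p` of `AaσbB` has two adjacent vertices in `A − a` and one vertex
in `B − b`. -/
def TwoAOneB {VA VB : Type*} (A : SimpleGraph VA) (a : VA) (b : VB)
    (p : ({x : VA // x ≠ a} ⊕ {y : VB // y ≠ b}) × ({x : VA // x ≠ a} ⊕ {y : VB // y ≠ b})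
      × ({x : VA // x ≠ a} ⊕ {y : VB // y ≠ b})) : Prop :=
  ∃ (x y : {x : VA // x ≠ a}) (z : {y : VB // y ≠ b}),
    pVerts p = {Sum.inl x, Sum.inl y, Sum.inr z} ∧ A.Adj x.1 y.1

/-- The path `p` of `AaσbB` has exactly one vertex in `A − a` and two adjacent vertices
in `B − b`. -/
def OneATwoB {VA VB : Type*} (B : SimpleGraph VB) (a : VA) (b : VB)
    (p : ({x : VA // x ≠ a} ⊕ {y : VB // y ≠ b}) × ({x : VA // x ≠ a} ⊕ {y : VB // y ≠ b})
      × ({x : VA // x ≠ a} ⊕ {y : VB // y ≠ b})) : Prop :=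
  ∃ (x : {x : VA // x ≠ a}) (y z : {y : VB // y ≠ b}),
    pVerts p = {Sum.inl x, Sum.inr y, Sum.inr z} ∧ B.Adj y.1 z.1

/-! ### Auxiliary definitions and lemmas -/

/-- The vertex set of an encoded path, as a `Finset`. -/
def pF {V : Type*} [DecidableEq V] (p : V × V × V) : Finset V := {p.1, p.2.1, p.2.2}

lemma mem_pF {V : Type*} [DecidableEq V] (p : V × V × V) (v : V) :
    v ∈ pF p ↔ v ∈ pVerts p := by simp [pF, pVerts]

/-- Number of vertices of the path on the left side. -/
def nA {α β : Type*} [DecidableEq α] [DecidableEq β]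
    (p : (α ⊕ β) × (α ⊕ β) × (α ⊕ β)) : ℕ :=
  ((pF p).filter (fun v => v.isLeft = true)).card

section NAcomp
variable {α β : Type*} [DecidableEq α] [DecidableEq β]

lemma nA_lrr {x : α} {y z : β} (_h : y ≠ z) : nA (Sum.inl x, Sum.inr y, Sum.inr z) = 1 := by
  simp [nA, pF, Finset.filter_insert, Finset.filter_singleton]

lemma nA_rll {x : β} {y z : α} (h : y ≠ z) : nA (Sum.inr x, Sum.inl y, Sum.inl z) = 2 := by
  simp [nA, pF, Finset.filter_insert, Finset.filter_singleton,
    Finset.card_insert_of_notMem, h]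

lemma nA_llr {y z : α} {x : β} (h : y ≠ z) : nA (Sum.inl y, Sum.inl z, Sum.inr x) = 2 := by
  simp [nA, pF, Finset.filter_insert, Finset.filter_singleton,
    Finset.card_insert_of_notMem, h]

lemma nA_rrl {y z : β} {x : α} (_h : y ≠ z) : nA (Sum.inr y, Sum.inr z, Sum.inl x) = 1 := by
  simp [nA, pF, Finset.filter_insert, Finset.filter_singleton]

lemma nA_lll {x y z : α} (h12 : x ≠ y) (h13 : x ≠ z) (h23 : y ≠ z) :
    nA ((Sum.inl x : α ⊕ β), Sum.inl y, Sum.inl z) = 3 := by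
  simp [nA, pF, Finset.filter_insert, Finset.filter_singleton,
    Finset.card_insert_of_notMem, h12, h13, h23]

lemma nA_rrr {x y z : β} : nA ((Sum.inr x : α ⊕ β), Sum.inr y, Sum.inr z) = 0 := by
  simp [nA, pF, Finset.filter_insert, Finset.filter_singleton]

end NAcomp

lemma pEdges_cases {V : Type*} {p : V × V × V} {u v : V} (h : s(u,v) ∈ pEdges p) :
    (u = p.1 ∧ v = p.2.1) ∨ (u = p.2.1 ∧ v = p.1) ∨
    (u = p.2.1 ∧ v = p.2.2) ∨ (u = p.2.2 ∧ v = p.2.1) := by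
  simp only [pEdges, Set.mem_insert_iff, Set.mem_singleton_iff, Sym2.eq_iff] at h
  tauto

lemma edge_mem_verts {V : Type*} {p : V × V × V} {u v : V} (h : s(u,v) ∈ pEdges p) :
    u ∈ pVerts p ∧ v ∈ pVerts p := by
  rcases pEdges_cases h with ⟨h1, h2⟩ | ⟨h1, h2⟩ | ⟨h1, h2⟩ | ⟨h1, h2⟩ <;>
    subst h1 <;> subst h2 <;> simp [pVerts]

section Glue
variable {VA VB : Type*} [DecidableEq VA] [DecidableEq VB]
  {A : SimpleGraph VA} {B : SimpleGraph VB} {a : VA} {b : VB}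
  {a1 a2 a3 : VA} {b1 b2 b3 : VB}

lemma glue_adj_ll {x y : {x : VA // x ≠ a}} :
    (glueV A B a b a1 a2 a3 b1 b2 b3).Adj (Sum.inl x) (Sum.inl y) ↔ A.Adj x.1 y.1 := by
  constructor
  · rintro ⟨-, h | h⟩
    · exact h
    · exact h.symm
  · intro h
    refine ⟨?_, Or.inl h⟩
    intro e
    exact h.ne (Subtype.ext_iff.mp (Sum.inl.inj e))

lemma glue_adj_lr {x : {x : VA // x ≠ a}} {y : {y : VB // y ≠ b}} :
    (glueV A B a b a1 a2 a3 b1 b2 b3).Adj (Sum.inl x) (Sum.inr y) ↔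
      ((x.1 = a1 ∧ y.1 = b1) ∨ (x.1 = a2 ∧ y.1 = b2) ∨ (x.1 = a3 ∧ y.1 = b3)) := by
  constructor
  · rintro ⟨-, h | h⟩
    · exact h
    · exact h.elim
  · intro h
    exact ⟨by simp, Or.inl h⟩

lemma glue_adj_rr {x y : {y : VB // y ≠ b}} :
    (glueV A B a b a1 a2 a3 b1 b2 b3).Adj (Sum.inr x) (Sum.inr y) ↔ B.Adj x.1 y.1 := by
  constructor
  · rintro ⟨-, h | h⟩
    · exact h
    · exact h.symm
  · intro h
    refine ⟨?_, Or.inl h⟩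
    intro e
    exact h.ne (Subtype.ext_iff.mp (Sum.inr.inj e))

lemma glue_adj_rl {x : {y : VB // y ≠ b}} {y : {x : VA // x ≠ a}} :
    (glueV A B a b a1 a2 a3 b1 b2 b3).Adj (Sum.inr x) (Sum.inl y) ↔
      ((y.1 = a1 ∧ x.1 = b1) ∨ (y.1 = a2 ∧ x.1 = b2) ∨ (y.1 = a3 ∧ x.1 = b3)) := by
  rw [adj_comm]; exact glue_adj_lr

/-- Structure of a path containing a matching (cross) edge whose endpoints have no
other cross neighbors. -/
lemma cross_path {x : {x : VA // x ≠ a}} {y : {y : VB // y ≠ b}}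
    {p : ({x : VA // x ≠ a} ⊕ {y : VB // y ≠ b}) × ({x : VA // x ≠ a} ⊕ {y : VB // y ≠ b})
      × ({x : VA // x ≠ a} ⊕ {y : VB // y ≠ b})}
    (hp : IsPathL (glueV A B a b a1 a2 a3 b1 b2 b3) p)
    (he : s(Sum.inl x, Sum.inr y) ∈ pEdges p)
    (hx : ∀ z, (glueV A B a b a1 a2 a3 b1 b2 b3).Adj (Sum.inl x) (Sum.inr z) → z = y)
    (hy : ∀ z, (glueV A B a b a1 a2 a3 b1 b2 b3).Adj (Sum.inl z) (Sum.inr y) → z = x) :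
    (TwoAOneB A a b p ∧ nA p = 2) ∨ (OneATwoB B a b p ∧ nA p = 1) := by
  obtain ⟨v1, v2, v3⟩ := p
  obtain ⟨h12, h23, h13, hA1, hA2⟩ := hp
  rcases pEdges_cases he with ⟨e1, e2⟩ | ⟨e1, e2⟩ | ⟨e1, e2⟩ | ⟨e1, e2⟩
  · -- v1 = inl x, v2 = inr y
    subst e1; subst e2
    rcases v3 with z | z
    · cases hy z hA2.symm
      exact absurd rfl h13
    · exact Or.inr ⟨⟨x, y, z, rfl, glue_adj_rr.mp hA2⟩,
        nA_lrr (fun e => h23 (congrArg Sum.inr e))⟩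
  · -- v2 = inl x, v1 = inr y
    subst e1; subst e2
    rcases v3 with z | z
    · refine Or.inl ⟨⟨x, z, y, ?_, glue_adj_ll.mp hA2⟩,
        nA_rll (fun e => h23 (congrArg Sum.inl e))⟩
      ext v; simp [pVerts]; tauto
    · cases hx z hA2
      exact absurd rfl h13
  · -- v2 = inl x, v3 = inr y
    subst e1; subst e2
    rcases v1 with z | z
    · exact Or.inl ⟨⟨z, x, y, rfl, glue_adj_ll.mp hA1⟩,
        nA_llr (fun e => h12 (congrArg Sum.inl e))⟩
    · cases hx z hA1.symm
      exact absurd rfl h13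
  · -- v2 = inr y, v3 = inl x
    subst e1; subst e2
    rcases v1 with z | z
    · cases hy z hA1
      exact absurd rfl h13
    · refine Or.inr ⟨⟨x, z, y, ?_, glue_adj_rr.mp hA1⟩,
        nA_rrl (fun e => h12 (congrArg Sum.inr e))⟩
      ext v; simp [pVerts]; tauto

end Glue

set_option maxHeartbeats 1000000 in
/-- Case analysis (a1) for a `Λ`-factor `P` of `G = AaσbB` when `v(A) ≡ 0 (mod 3)`:
with `P'` the set of paths of `P` meeting the three cross edges, exactly one of
(a1.1), (a1.2), (a1.3) holds. -/
theorem stmt8 {VA VB : Type*} [Fintype VA] [Fintype VB] [DecidableEq VA] [DecidableEq VB]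
    (A : SimpleGraph VA) (B : SimpleGraph VB) (a : VA) (b : VB)
    (a1 a2 a3 : VA) (b1 b2 b3 : VB)
    (hNa : A.neighborSet a = {a1, a2, a3})
    (ha12 : a1 ≠ a2) (ha13 : a1 ≠ a3) (ha23 : a2 ≠ a3)
    (hNb : B.neighborSet b = {b1, b2, b3})
    (hb12 : b1 ≠ b2) (hb13 : b1 ≠ b3) (hb23 : b2 ≠ b3)
    (ha1 : a1 ≠ a) (ha2 : a2 ≠ a) (ha3 : a3 ≠ a)
    (hb1 : b1 ≠ b) (hb2 : b2 ≠ b) (hb3 : b3 ≠ b)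
    (hmod : Fintype.card VA % 3 = 0)
    (P P' : Finset (({x : VA // x ≠ a} ⊕ {y : VB // y ≠ b})
      × ({x : VA // x ≠ a} ⊕ {y : VB // y ≠ b}) × ({x : VA // x ≠ a} ⊕ {y : VB // y ≠ b})))
    (hP : IsFactor (glueV A B a b a1 a2 a3 b1 b2 b3) P)
    (hP' : ∀ p, p ∈ P' ↔ p ∈ P ∧ ∃ e ∈ pEdges p,
      e = s(Sum.inl ⟨a1, ha1⟩, Sum.inr ⟨b1, hb1⟩) ∨
      e = s(Sum.inl ⟨a2, ha2⟩, Sum.inr ⟨b2, hb2⟩) ∨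
      e = s(Sum.inl ⟨a3, ha3⟩, Sum.inr ⟨b3, hb3⟩)) :
    ((P'.card = 1 ∧ ∀ p ∈ P', TwoAOneB A a b p) ∨
     (P'.card = 2 ∧ ∀ p ∈ P', OneATwoB B a b p) ∨
     (P'.card = 3 ∧ ∃ p ∈ P', OneATwoB B a b p ∧
        ∀ q ∈ P', q ≠ p → TwoAOneB A a b q)) ∧
    ¬((P'.card = 1 ∧ ∀ p ∈ P', TwoAOneB A a b p) ∧
      (P'.card = 2 ∧ ∀ p ∈ P', OneATwoB B a b p)) ∧
    ¬((P'.card = 1 ∧ ∀ p ∈ P', TwoAOneB A a b p) ∧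
      (P'.card = 3 ∧ ∃ p ∈ P', OneATwoB B a b p ∧
        ∀ q ∈ P', q ≠ p → TwoAOneB A a b q)) ∧
    ¬((P'.card = 2 ∧ ∀ p ∈ P', OneATwoB B a b p) ∧
      (P'.card = 3 ∧ ∃ p ∈ P', OneATwoB B a b p ∧
        ∀ q ∈ P', q ≠ p → TwoAOneB A a b q)) := by
  classical
  obtain ⟨⟨hpath, hdisj⟩, -, hcover⟩ := hP
  have hP'sub : P' ⊆ P := fun p hp => ((hP' p).mp hp).1
  -- every path of `P'` is of one of the two shapes
  have hkey : ∀ p ∈ P', (TwoAOneB A a b p ∧ nA p = 2) ∨ (OneATwoB B a b p ∧ nA p = 1) := by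
    intro p hp
    obtain ⟨hpP, e, he, hcr⟩ := (hP' p).mp hp
    rcases hcr with rfl | rfl | rfl
    · refine cross_path (hpath p hpP) he ?_ ?_
      · intro z hz
        rcases glue_adj_lr.mp hz with ⟨-, h⟩ | ⟨h, -⟩ | ⟨h, -⟩
        · exact Subtype.ext h
        · exact absurd h ha12
        · exact absurd h ha13
      · intro z hz
        rcases glue_adj_lr.mp hz with ⟨h, -⟩ | ⟨-, h⟩ | ⟨-, h⟩
        · exact Subtype.ext h
        · exact absurd h hb12
        · exact absurd h hb13
    · refine cross_path (hpath p hpP) he ?_ ?_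
      · intro z hz
        rcases glue_adj_lr.mp hz with ⟨h, -⟩ | ⟨-, h⟩ | ⟨h, -⟩
        · exact absurd h ha12.symm
        · exact Subtype.ext h
        · exact absurd h ha23
      · intro z hz
        rcases glue_adj_lr.mp hz with ⟨-, h⟩ | ⟨h, -⟩ | ⟨-, h⟩
        · exact absurd h hb12.symm
        · exact Subtype.ext h
        · exact absurd h hb23
    · refine cross_path (hpath p hpP) he ?_ ?_
      · intro z hz
        rcases glue_adj_lr.mp hz with ⟨h, -⟩ | ⟨h, -⟩ | ⟨-, h⟩
        · exact absurd h ha13.symm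
        · exact absurd h ha23.symm
        · exact Subtype.ext h
      · intro z hz
        rcases glue_adj_lr.mp hz with ⟨-, h⟩ | ⟨-, h⟩ | ⟨h, -⟩
        · exact absurd h hb13.symm
        · exact absurd h hb23.symm
        · exact Subtype.ext h
  -- paths not in `P'` stay on one side
  have hpure : ∀ p ∈ P, p ∉ P' → nA p = 0 ∨ nA p = 3 := by
    intro p hpP hpP'
    have hmix : ∀ (x : {x : VA // x ≠ a}) (y : {y : VB // y ≠ b}),
        s(Sum.inl x, Sum.inr y) ∈ pEdges p →
        (glueV A B a b a1 a2 a3 b1 b2 b3).Adj (Sum.inl x) (Sum.inr y) → False := by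
      intro x y hmem hadj
      apply hpP'
      rw [hP']
      refine ⟨hpP, s(Sum.inl x, Sum.inr y), hmem, ?_⟩
      rcases glue_adj_lr.mp hadj with ⟨h1, h2⟩ | ⟨h1, h2⟩ | ⟨h1, h2⟩
      · left
        rw [show x = ⟨a1, ha1⟩ from Subtype.ext h1, show y = ⟨b1, hb1⟩ from Subtype.ext h2]
      · right; left
        rw [show x = ⟨a2, ha2⟩ from Subtype.ext h1, show y = ⟨b2, hb2⟩ from Subtype.ext h2]
      · right; right
        rw [show x = ⟨a3, ha3⟩ from Subtype.ext h1, show y = ⟨b3, hb3⟩ from Subtype.ext h2]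
    obtain ⟨v1, v2, v3⟩ := p
    obtain ⟨h12, h23, h13, hA1, hA2⟩ := hpath _ hpP
    have hmem1 : ∀ u v : ({x : VA // x ≠ a} ⊕ {y : VB // y ≠ b}),
        s(v1, v2) ∈ pEdges (v1, v2, v3) := by
      intro u v; exact Set.mem_insert _ _
    rcases v1 with z1 | z1 <;> rcases v2 with z2 | z2 <;> rcases v3 with z3 | z3
    · exact Or.inr (nA_lll (fun e => h12 (congrArg Sum.inl e))
        (fun e => h13 (congrArg Sum.inl e)) (fun e => h23 (congrArg Sum.inl e)))
    · exact absurd hA2 (fun h => hmix z2 z3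
        (Set.mem_insert_iff.mpr (Or.inr (Set.mem_singleton _))) h)
    · exact absurd hA1 (fun h => hmix z1 z2 (Set.mem_insert _ _) h)
    · exact absurd hA1 (fun h => hmix z1 z2 (Set.mem_insert _ _) h)
    · exact absurd hA1.symm (fun h => hmix z2 z1
        (Set.mem_insert_iff.mpr (Or.inl Sym2.eq_swap)) h)
    · exact absurd hA1.symm (fun h => hmix z2 z1
        (Set.mem_insert_iff.mpr (Or.inl Sym2.eq_swap)) h)
    · exact absurd hA2.symm (fun h => hmix z3 z2
        (Set.mem_insert_iff.mpr (Or.inr Sym2.eq_swap)) h)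
    · exact Or.inl nA_rrr
  -- counting
  have hdisjF : ∀ p ∈ P, ∀ q ∈ P, p ≠ q → Disjoint (pF p) (pF q) := by
    intro p hp q hq hne
    rw [Finset.disjoint_left]
    intro v hvp hvq
    exact Set.disjoint_left.mp (hdisj p hp q hq hne) ((mem_pF p v).mp hvp) ((mem_pF q v).mp hvq)
  have hUniv : (Finset.univ : Finset ({x : VA // x ≠ a} ⊕ {y : VB // y ≠ b})) = P.biUnion pF := by
    ext v
    simp only [Finset.mem_univ, true_iff, Finset.mem_biUnion]
    obtain ⟨p, hp, hv⟩ := hcover v (Set.mem_univ v)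
    exact ⟨p, hp, (mem_pF p v).mpr hv⟩
  have hsumTotal : ∑ p ∈ P, nA p = Fintype.card VA - 1 := by
    have h2 : (Finset.univ.filter
          (fun v : {x : VA // x ≠ a} ⊕ {y : VB // y ≠ b} => Sum.isLeft v = true))
        = Finset.univ.map ⟨Sum.inl, Sum.inl_injective⟩ := by
      ext v; rcases v with v | v <;> simp
    have h1 : ((Finset.univ : Finset ({x : VA // x ≠ a} ⊕ {y : VB // y ≠ b})).filter
        (fun v => Sum.isLeft v = true)).card = Fintype.card VA - 1 := by
      rw [h2, Finset.card_map, Finset.card_univ]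
      have : Fintype.card {x : VA // x ≠ a} = Fintype.card VA - Fintype.card {x : VA // x = a} :=
        Fintype.card_subtype_compl _
      rw [this, Fintype.card_subtype_eq]
    rw [← h1, hUniv, Finset.filter_biUnion,
      Finset.card_biUnion (fun p hp q hq hne =>
        (hdisjF p hp q hq hne).mono (Finset.filter_subset _ _) (Finset.filter_subset _ _))]
    rfl
  have hdvd : 3 ∣ ∑ p ∈ P \ P', nA p := by
    refine Finset.dvd_sum ?_
    intro p hp
    obtain ⟨hp1, hp2⟩ := Finset.mem_sdiff.mp hp
    rcases hpure p hp1 hp2 with h | h <;> simp [h]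
  have hsplit : ∑ p ∈ P \ P', nA p + ∑ p ∈ P', nA p = ∑ p ∈ P, nA p :=
    Finset.sum_sdiff hP'sub
  have hposA : 0 < Fintype.card VA := Fintype.card_pos_iff.mpr ⟨a⟩
  -- the small/big split of `P'`
  set S := P'.filter (fun p => nA p = 1) with hSdef
  set T := P'.filter (fun p => ¬ nA p = 1) with hTdef
  have hST : S.card + T.card = P'.card :=
    Finset.card_filter_add_card_filter_not _
  have hSsum : ∑ p ∈ S, nA p = S.card := by
    have h : ∀ p ∈ S, nA p = 1 := fun p hp => (Finset.mem_filter.mp hp).2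
    rw [Finset.sum_congr rfl h, Finset.sum_const, smul_eq_mul, mul_one]
  have hTval : ∀ p ∈ T, nA p = 2 := by
    intro p hp
    obtain ⟨hp', hne⟩ := Finset.mem_filter.mp hp
    rcases hkey p hp' with ⟨-, h⟩ | ⟨-, h⟩
    · exact h
    · exact absurd h hne
  have hTsum : ∑ p ∈ T, nA p = T.card * 2 := by
    rw [Finset.sum_congr rfl hTval, Finset.sum_const, smul_eq_mul]
  have hP'split : ∑ p ∈ S, nA p + ∑ p ∈ T, nA p = ∑ p ∈ P', nA p :=
    Finset.sum_filter_add_sum_filter_not _ _ _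
  -- |P'| ≤ 3
  have hone : ∀ (v : {x : VA // x ≠ a} ⊕ {y : VB // y ≠ b}) (p : _) (_ : p ∈ P')
      (q : _) (_ : q ∈ P'), v ∈ pF p → v ∈ pF q → p = q := by
    intro v p hp q hq hvp hvq
    by_contra hne
    exact Set.disjoint_left.mp (hdisj p (hP'sub hp) q (hP'sub hq) hne)
      ((mem_pF p v).mp hvp) ((mem_pF q v).mp hvq)
  have hle : ∀ v : {x : VA // x ≠ a} ⊕ {y : VB // y ≠ b},
      (P'.filter (fun p => v ∈ pF p)).card ≤ 1 := by
    intro v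
    rw [Finset.card_le_one]
    intro p hp q hq
    obtain ⟨hp1, hp2⟩ := Finset.mem_filter.mp hp
    obtain ⟨hq1, hq2⟩ := Finset.mem_filter.mp hq
    exact hone v p hp1 q hq1 hp2 hq2
  have hcardP' : P'.card ≤ 3 := by
    set Q1 := P'.filter (fun p => (Sum.inl ⟨a1, ha1⟩ : {x : VA // x ≠ a} ⊕ {y : VB // y ≠ b}) ∈ pF p)
    set Q2 := P'.filter (fun p => (Sum.inl ⟨a2, ha2⟩ : {x : VA // x ≠ a} ⊕ {y : VB // y ≠ b}) ∈ pF p)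
    set Q3 := P'.filter (fun p => (Sum.inl ⟨a3, ha3⟩ : {x : VA // x ≠ a} ⊕ {y : VB // y ≠ b}) ∈ pF p)
    have hsub : P' ⊆ Q1 ∪ Q2 ∪ Q3 := by
      intro p hp
      obtain ⟨-, e, he, hcr⟩ := (hP' p).mp hp
      simp only [Finset.mem_union, Finset.mem_filter, Q1, Q2, Q3]
      rcases hcr with rfl | rfl | rfl
      · exact Or.inl (Or.inl ⟨hp, (mem_pF _ _).mpr (edge_mem_verts he).1⟩)
      · exact Or.inl (Or.inr ⟨hp, (mem_pF _ _).mpr (edge_mem_verts he).1⟩)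
      · exact Or.inr ⟨hp, (mem_pF _ _).mpr (edge_mem_verts he).1⟩
    have c1 := Finset.card_le_card hsub
    have c2 := Finset.card_union_le (Q1 ∪ Q2) Q3
    have c3 := Finset.card_union_le Q1 Q2
    have l1 : Q1.card ≤ 1 := hle _
    have l2 : Q2.card ≤ 1 := hle _
    have l3 : Q3.card ≤ 1 := hle _
    omega
  have hsum2 : (∑ p ∈ P', nA p) % 3 = 2 := by omega
  have htri : (S.card = 0 ∧ T.card = 1) ∨ (S.card = 2 ∧ T.card = 0) ∨
      (S.card = 1 ∧ T.card = 2) := by omega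
  refine ⟨?_, ?_, ?_, ?_⟩
  · rcases htri with ⟨hS0, hT1⟩ | ⟨hS2, hT0⟩ | ⟨hS1, hT2⟩
    · left
      refine ⟨by omega, ?_⟩
      intro p hp
      rcases hkey p hp with ⟨h, -⟩ | ⟨-, h⟩
      · exact h
      · have hmem : p ∈ S := Finset.mem_filter.mpr ⟨hp, h⟩
        rw [Finset.card_eq_zero.mp hS0] at hmem
        exact absurd hmem (Finset.notMem_empty p)
    · right; left
      refine ⟨by omega, ?_⟩
      intro p hp
      rcases hkey p hp with ⟨-, h⟩ | ⟨h, -⟩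
      · have hmem : p ∈ T := Finset.mem_filter.mpr ⟨hp, by omega⟩
        rw [Finset.card_eq_zero.mp hT0] at hmem
        exact absurd hmem (Finset.notMem_empty p)
      · exact h
    · right; right
      refine ⟨by omega, ?_⟩
      obtain ⟨p0, hp0⟩ := Finset.card_eq_one.mp hS1
      have hp0S : p0 ∈ S := hp0 ▸ Finset.mem_singleton_self p0
      obtain ⟨hp0P', hp0nA⟩ := Finset.mem_filter.mp hp0S
      refine ⟨p0, hp0P', ?_, ?_⟩
      · rcases hkey p0 hp0P' with ⟨-, h⟩ | ⟨h, -⟩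
        · omega
        · exact h
      · intro q hq hqne
        rcases hkey q hq with ⟨h, -⟩ | ⟨-, h⟩
        · exact h
        · have hmem : q ∈ S := Finset.mem_filter.mpr ⟨hq, h⟩
          rw [hp0] at hmem
          exact absurd (Finset.mem_singleton.mp hmem) hqne
  · rintro ⟨⟨h1, -⟩, ⟨h2, -⟩⟩; omega
  · rintro ⟨⟨h1, -⟩, ⟨h2, -⟩⟩; omega
  · rintro ⟨⟨h1, -⟩, ⟨h2, -⟩⟩; omega
end

section
/- Let A¹,A²,A³ be disjoint cubic graphs with v(Aⁱ) ≡ 0 (mod 6) for each i, let aⁱ be a vertex of Aⁱ, and let G = Y(A¹,a¹;A²,a²;A³,a³). For each i let Dⁱ denote the set of edges of G having exactly one end-vertex in V(Aⁱ − aⁱ). Then for every Λ-factor P of G and every i ∈ {1,2,3}, the number of paths of P that contain at least one edge of Dⁱ is either 1 or 2. -/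
open SimpleGraph

/-- The vertex type of the graph `Y(A¹,a¹; A²,a²; A³,a³)`. -/
abbrev YVert {V1 V2 V3 : Type*} (a1 : V1) (a2 : V2) (a3 : V3) : Type _ :=
  ({x : V1 // x ≠ a1} ⊕ {x : V2 // x ≠ a2} ⊕ {x : V3 // x ≠ a3}) ⊕ Fin 3

/-- The graph `Y(A¹,a¹; A²,a²; A³,a³)`: delete the degree-3 vertex `aⁱ` (with neighbors
`nᵢ₁,nᵢ₂,nᵢ₃`) from each `Aⁱ`, add three new vertices `z₀,z₁,z₂` (the `Fin 3` part), and
join `z_j` to `nᵢⱼ` for all `i, j`. -/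
def YGraph {V1 V2 V3 : Type*} (A1 : SimpleGraph V1) (A2 : SimpleGraph V2)
    (A3 : SimpleGraph V3) (a1 : V1) (a2 : V2) (a3 : V3)
    (n11 n12 n13 : V1) (n21 n22 n23 : V2) (n31 n32 n33 : V3) :
    SimpleGraph (YVert a1 a2 a3) :=
  SimpleGraph.fromRel fun u v =>
    match u, v with
    | Sum.inl (Sum.inl x), Sum.inl (Sum.inl y) => A1.Adj x.1 y.1
    | Sum.inl (Sum.inr (Sum.inl x)), Sum.inl (Sum.inr (Sum.inl y)) => A2.Adj x.1 y.1
    | Sum.inl (Sum.inr (Sum.inr x)), Sum.inl (Sum.inr (Sum.inr y)) => A3.Adj x.1 y.1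
    | Sum.inl (Sum.inl x), Sum.inr j =>
        (j = 0 ∧ x.1 = n11) ∨ (j = 1 ∧ x.1 = n12) ∨ (j = 2 ∧ x.1 = n13)
    | Sum.inl (Sum.inr (Sum.inl x)), Sum.inr j =>
        (j = 0 ∧ x.1 = n21) ∨ (j = 1 ∧ x.1 = n22) ∨ (j = 2 ∧ x.1 = n23)
    | Sum.inl (Sum.inr (Sum.inr x)), Sum.inr j =>
        (j = 0 ∧ x.1 = n31) ∨ (j = 1 ∧ x.1 = n32) ∨ (j = 2 ∧ x.1 = n33)
    | _, _ => False

/-- `v` lies in the `i`-th branch part `Aⁱ − aⁱ` of the vertex set of `Y`. -/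
def YinPart {S1 S2 S3 : Type*} (i : Fin 3) (v : (S1 ⊕ S2 ⊕ S3) ⊕ Fin 3) : Prop :=
  (i = 0 ∧ ∃ x, v = Sum.inl (Sum.inl x)) ∨
  (i = 1 ∧ ∃ x, v = Sum.inl (Sum.inr (Sum.inl x))) ∨
  (i = 2 ∧ ∃ x, v = Sum.inl (Sum.inr (Sum.inr x)))

namespace Stmt10Aux

def fV {V : Type*} [DecidableEq V] (p : V × V × V) : Finset V := {p.1, p.2.1, p.2.2}

lemma mem_fV {V : Type*} [DecidableEq V] {p : V × V × V} {v : V} :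
    v ∈ fV p ↔ v ∈ pVerts p := by simp [fV, pVerts]

lemma card_fV_le {V : Type*} [DecidableEq V] (p : V × V × V) : (fV p).card ≤ 3 := by
  classical
  refine (Finset.card_insert_le _ _).trans ?_
  have h := Finset.card_insert_le p.2.1 ({p.2.2} : Finset V)
  simp only [Finset.card_singleton] at h
  omega

lemma card_fV {V : Type*} [DecidableEq V] {p : V × V × V}
    (h1 : p.1 ≠ p.2.1) (h2 : p.2.1 ≠ p.2.2) (h3 : p.1 ≠ p.2.2) : (fV p).card = 3 := by
  rw [fV, Finset.card_insert_of_notMem (by simp [h1, h3]),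
    Finset.card_insert_of_notMem (by simp [h2]), Finset.card_singleton]

lemma factor_sum {V : Type*} [Fintype V] [DecidableEq V] {G : SimpleGraph V}
    {P : Finset (V × V × V)} (hP : IsFactor G P) (T : Finset V) :
    ∑ p ∈ P, (fV p ∩ T).card = T.card := by
  have hdisj : ∀ p ∈ P, ∀ q ∈ P, p ≠ q → Disjoint (fV p ∩ T) (fV q ∩ T) := by
    intro p hp q hq hpq
    have hd := hP.1.2 p hp q hq hpq
    rw [Finset.disjoint_left]
    intro v hv hv'
    exact Set.disjoint_left.mp hd (mem_fV.mp (Finset.mem_inter.mp hv).1)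
      (mem_fV.mp (Finset.mem_inter.mp hv').1)
  rw [← Finset.card_biUnion hdisj]
  congr 1
  ext v
  simp only [Finset.mem_biUnion, Finset.mem_inter]
  constructor
  · rintro ⟨p, hp, hv, hvT⟩; exact hvT
  · intro hv
    obtain ⟨p, hp, hvp⟩ := hP.2.2 v (Set.mem_univ v)
    exact ⟨p, hp, mem_fV.mpr hvp, hv⟩

lemma boundary_sum {V : Type*} [Fintype V] [DecidableEq V] {G : SimpleGraph V}
    {P : Finset (V × V × V)} (hP : IsFactor G P) (T : Finset V) :
    (∑ p ∈ P.filter (fun p => (fV p ∩ T).card = 1 ∨ (fV p ∩ T).card = 2),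
      (fV p ∩ T).card) % 3 = T.card % 3 := by
  classical
  have h := factor_sum hP T
  have hsplit := Finset.sum_filter_add_sum_filter_not P
    (fun p => (fV p ∩ T).card = 1 ∨ (fV p ∩ T).card = 2) (fun p => (fV p ∩ T).card)
  have hdvd : (3:ℕ) ∣ ∑ p ∈ P.filter (fun p => ¬((fV p ∩ T).card = 1 ∨ (fV p ∩ T).card = 2)),
      (fV p ∩ T).card := by
    apply Finset.dvd_sum
    intro p hp
    have h3 : (fV p ∩ T).card ≤ 3 :=
      (Finset.card_le_card Finset.inter_subset_left).trans (card_fV_le p)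
    have hnot := (Finset.mem_filter.mp hp).2
    omega
  omega

end Stmt10Aux
namespace Stmt10Aux

variable {V1 V2 V3 : Type*} {a1 : V1} {a2 : V2} {a3 : V3}

def partMap : YVert a1 a2 a3 → Option (Fin 3)
  | Sum.inl (Sum.inl _) => some 0
  | Sum.inl (Sum.inr (Sum.inl _)) => some 1
  | Sum.inl (Sum.inr (Sum.inr _)) => some 2
  | Sum.inr _ => none

lemma yinPart_iff {i : Fin 3} {v : YVert a1 a2 a3} :
    YinPart i v ↔ partMap v = some i := by
  rcases v with ((x | x | x) | j) <;>
    simp [YinPart, partMap, eq_comm]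

lemma adj_cross (A1 : SimpleGraph V1) (A2 : SimpleGraph V2) (A3 : SimpleGraph V3)
    (n11 n12 n13 : V1) (n21 n22 n23 : V2) (n31 n32 n33 : V3)
    {u v : YVert a1 a2 a3} {i : Fin 3}
    (h : (YGraph A1 A2 A3 a1 a2 a3 n11 n12 n13 n21 n22 n23 n31 n32 n33).Adj u v)
    (hu : partMap u = some i) (hv : partMap v ≠ some i) : partMap v = none := by
  rcases u with ((x | x | x) | j) <;> rcases v with ((y | y | y) | k) <;>
    simp_all [YGraph, partMap, SimpleGraph.fromRel_adj]

end Stmt10Aux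
namespace Stmt10Aux

variable {V1 V2 V3 : Type*} [Fintype V1] [Fintype V2] [Fintype V3]
  [DecidableEq V1] [DecidableEq V2] [DecidableEq V3] {a1 : V1} {a2 : V2} {a3 : V3}

def SPfin (a1 : V1) (a2 : V2) (a3 : V3) (j : Fin 3) : Finset (YVert a1 a2 a3) :=
  Finset.univ.filter (fun v => partMap v = some j)

def Zfin (a1 : V1) (a2 : V2) (a3 : V3) : Finset (YVert a1 a2 a3) :=
  Finset.univ.filter (fun v => partMap v = none)

lemma mem_SPfin {j : Fin 3} {v : YVert a1 a2 a3} :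
    v ∈ SPfin a1 a2 a3 j ↔ partMap v = some j := by simp [SPfin]

lemma mem_Zfin {v : YVert a1 a2 a3} :
    v ∈ Zfin a1 a2 a3 ↔ partMap v = none := by simp [Zfin]

lemma card_Zfin : (Zfin a1 a2 a3).card = 3 := by
  have h : Zfin a1 a2 a3 = Finset.univ.image
      (fun k : Fin 3 => (Sum.inr k : YVert a1 a2 a3)) := by
    ext v
    rcases v with ((x | x | x) | j) <;> simp [mem_Zfin, partMap]
  rw [h, Finset.card_image_of_injective _ (fun x y hxy => by simpa using hxy)]
  simp

lemma card_subtype_ne {α : Type*} [Fintype α] [DecidableEq α] (a : α) :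
    Fintype.card {x : α // x ≠ a} = Fintype.card α - 1 := by
  have := Fintype.card_subtype_compl (fun x : α => x = a)
  simpa [Fintype.card_subtype_eq] using this

lemma card_SPfin0 : (SPfin a1 a2 a3 0).card = Fintype.card V1 - 1 := by
    have h : SPfin a1 a2 a3 0 = Finset.univ.image
        (fun x : {x : V1 // x ≠ a1} => (Sum.inl (Sum.inl x) : YVert a1 a2 a3)) := by
      ext v
      rcases v with ((x | x | x) | j) <;> simp [mem_SPfin, partMap]
    rw [h, Finset.card_image_of_injective _ (fun x y hxy => by simpa using hxy)]
    simp [card_subtype_ne]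
lemma card_SPfin1 : (SPfin a1 a2 a3 1).card = Fintype.card V2 - 1 := by
    have h : SPfin a1 a2 a3 1 = Finset.univ.image
        (fun x : {x : V2 // x ≠ a2} => (Sum.inl (Sum.inr (Sum.inl x)) : YVert a1 a2 a3)) := by
      ext v
      rcases v with ((x | x | x) | j) <;> simp [mem_SPfin, partMap]
    rw [h, Finset.card_image_of_injective _ (fun x y hxy => by simpa using hxy)]
    simp [card_subtype_ne]
lemma card_SPfin2 : (SPfin a1 a2 a3 2).card = Fintype.card V3 - 1 := by
    have h : SPfin a1 a2 a3 2 = Finset.univ.image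
        (fun x : {x : V3 // x ≠ a3} => (Sum.inl (Sum.inr (Sum.inr x)) : YVert a1 a2 a3)) := by
      ext v
      rcases v with ((x | x | x) | j) <;> simp [mem_SPfin, partMap]
    rw [h, Finset.card_image_of_injective _ (fun x y hxy => by simpa using hxy)]
    simp [card_subtype_ne]

end Stmt10Aux
namespace Stmt10Aux

lemma endgame {α : Type*} [DecidableEq α] {P Qi Qj : Finset α} {ci cj zc : α → ℕ}
    (hQiP : Qi ⊆ P) (hQjP : Qj ⊆ P)
    (hci : ∀ p ∈ Qi, ci p = 1 ∨ ci p = 2)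
    (hcj : ∀ p ∈ Qj, cj p = 1 ∨ cj p = 2)
    (hz_i : ∀ p ∈ Qi, 1 ≤ zc p)
    (hz_j : ∀ p ∈ Qj, 1 ≤ zc p)
    (hzsum : ∑ p ∈ P, zc p = 3)
    (htri : ∀ p, cj p + zc p + ci p ≤ 3)
    (hsum_i : (∑ p ∈ Qi, ci p) % 3 = 2)
    (hsum_j : (∑ p ∈ Qj, cj p) % 3 = 2) :
    Qi.card = 1 ∨ Qi.card = 2 := by
  classical
  have hzsum_le : ∑ p ∈ Qi, zc p ≤ 3 := hzsum ▸ Finset.sum_le_sum_of_subset hQiP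
  have hcard_le : Qi.card ≤ ∑ p ∈ Qi, zc p := by
    rw [Finset.card_eq_sum_ones]
    exact Finset.sum_le_sum hz_i
  have hQ3 : Qi.card ≤ 3 := le_trans hcard_le hzsum_le
  have hQ0 : Qi.card ≠ 0 := by
    intro h
    rw [Finset.card_eq_zero] at h
    rw [h, Finset.sum_empty] at hsum_i
    simp at hsum_i
  have hQne3 : Qi.card ≠ 3 := by
    intro h3
    obtain ⟨a, b, c, hab, hac, hbc, habc⟩ := Finset.card_eq_three.mp h3
    have hsumQ : ∀ f : α → ℕ, ∑ p ∈ Qi, f p = f a + f b + f c := by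
      intro f
      rw [habc, Finset.sum_insert (by simp [hab, hac]),
        Finset.sum_insert (by simp [hbc]), Finset.sum_singleton]
      ring
    have haQ : a ∈ Qi := by rw [habc]; simp
    have hbQ : b ∈ Qi := by rw [habc]; simp
    have hcQ : c ∈ Qi := by rw [habc]; simp
    have hca := hci a haQ
    have hcb := hci b hbQ
    have hcc := hci c hcQ
    have hsum5 : ci a + ci b + ci c = 5 := by
      rw [hsumQ] at hsum_i; omega
    have hz_a := hz_i a haQ
    have hz_b := hz_i b hbQ
    have hz_c := hz_i c hcQ
    have hzsum3 : zc a + zc b + zc c ≤ 3 := by rw [← hsumQ]; exact hzsum_le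
    have hza : zc a = 1 := by omega
    have hzb : zc b = 1 := by omega
    have hzc : zc c = 1 := by omega
    have hcompl : ∀ q ∈ P, q ∉ Qi → zc q = 0 := by
      intro q hq hqn
      have hsplit := Finset.sum_sdiff (f := zc) hQiP
      have h1 : ∑ p ∈ Qi, zc p = 3 := by rw [hsumQ]; omega
      have h0 : ∑ p ∈ P \ Qi, zc p = 0 := by omega
      exact Finset.sum_eq_zero_iff.mp h0 q (Finset.mem_sdiff.mpr ⟨hq, hqn⟩)
    have hQjQi : Qj ⊆ Qi := by
      intro q hq
      by_contra hqn
      have h0 := hcompl q (hQjP hq) hqn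
      have h1 := hz_j q hq
      omega
    have hmem3 : ∀ q ∈ Qj, q = a ∨ q = b ∨ q = c := by
      intro q hq
      have := hQjQi hq
      rw [habc] at this; simpa using this
    have hterm : ∀ q ∈ Qj, cj q = 1 ∧ ci q = 1 := by
      intro q hq
      have hqQi := hQjQi hq
      have hz : zc q = 1 := by
        rcases hmem3 q hq with rfl | rfl | rfl <;> omega
      have hi' := hci q hqQi
      have hj' := hcj q hq
      have ht := htri q
      omega
    have hsumj : ∑ q ∈ Qj, cj q = Qj.card := by
      rw [Finset.card_eq_sum_ones]
      exact Finset.sum_congr rfl (fun q hq => (hterm q hq).1)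
    have hcardle : Qj.card ≤ Qi.card := Finset.card_le_card hQjQi
    have hcardj : Qj.card = 2 := by rw [hsumj] at hsum_j; omega
    obtain ⟨q1, hq1, q2, hq2, hq12⟩ := Finset.one_lt_card.mp (by omega : 1 < Qj.card)
    have h1i := (hterm q1 hq1).2
    have h2i := (hterm q2 hq2).2
    rcases hmem3 q1 hq1 with rfl | rfl | rfl <;> rcases hmem3 q2 hq2 with rfl | rfl | rfl <;>
      first | exact hq12 rfl | omega
  omega

end Stmt10Aux
open Stmt10Aux in
/-- In `G = Y(A¹,a¹; A²,a²; A³,a³)` with each `Aⁱ` cubic and `v(Aⁱ) ≡ 0 (mod 6)`,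
for every `Λ`-factor `P` of `G` and every `i`, the number of paths of `P` containing
an edge of `Dⁱ` (the edges of `G` with exactly one end in `Aⁱ − aⁱ`) is 1 or 2. -/
theorem stmt10 {V1 V2 V3 : Type*} [Fintype V1] [Fintype V2] [Fintype V3]
    [DecidableEq V1] [DecidableEq V2] [DecidableEq V3]
    (A1 : SimpleGraph V1) (A2 : SimpleGraph V2) (A3 : SimpleGraph V3)
    (a1 : V1) (a2 : V2) (a3 : V3)
    (n11 n12 n13 : V1) (n21 n22 n23 : V2) (n31 n32 n33 : V3)
    (hc1 : IsCubic A1) (hc2 : IsCubic A2) (hc3 : IsCubic A3)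
    (hm1 : Fintype.card V1 % 6 = 0) (hm2 : Fintype.card V2 % 6 = 0)
    (hm3 : Fintype.card V3 % 6 = 0)
    (hN1 : A1.neighborSet a1 = {n11, n12, n13})
    (h1a : n11 ≠ n12) (h1b : n11 ≠ n13) (h1c : n12 ≠ n13)
    (hN2 : A2.neighborSet a2 = {n21, n22, n23})
    (h2a : n21 ≠ n22) (h2b : n21 ≠ n23) (h2c : n22 ≠ n23)
    (hN3 : A3.neighborSet a3 = {n31, n32, n33})
    (h3a : n31 ≠ n32) (h3b : n31 ≠ n33) (h3c : n32 ≠ n33)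
    (P : Finset (YVert a1 a2 a3 × YVert a1 a2 a3 × YVert a1 a2 a3))
    (hP : IsFactor (YGraph A1 A2 A3 a1 a2 a3 n11 n12 n13 n21 n22 n23 n31 n32 n33) P)
    (i : Fin 3)
    (Q : Finset (YVert a1 a2 a3 × YVert a1 a2 a3 × YVert a1 a2 a3))
    (hQ : ∀ p, p ∈ Q ↔ p ∈ P ∧ ∃ e ∈ pEdges p,
      e ∈ (YGraph A1 A2 A3 a1 a2 a3 n11 n12 n13 n21 n22 n23 n31 n32 n33).edgeSet ∧
      ∃ u v, e = s(u, v) ∧ YinPart i u ∧ ¬ YinPart i v) :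
    Q.card = 1 ∨ Q.card = 2 := by
  classical
  set G := YGraph A1 A2 A3 a1 a2 a3 n11 n12 n13 n21 n22 n23 n31 n32 n33 with hG
  have hpath : ∀ p ∈ P, IsPathL G p := hP.1.1
  -- part cardinalities mod 3
  have hcardV1 : 1 ≤ Fintype.card V1 := Fintype.card_pos_iff.mpr ⟨a1⟩
  have hcardV2 : 1 ≤ Fintype.card V2 := Fintype.card_pos_iff.mpr ⟨a2⟩
  have hcardV3 : 1 ≤ Fintype.card V3 := Fintype.card_pos_iff.mpr ⟨a3⟩
  have hSPmod : ∀ j : Fin 3, (SPfin a1 a2 a3 j).card % 3 = 2 := by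
    intro j
    fin_cases j
    · show (SPfin a1 a2 a3 0).card % 3 = 2
      rw [card_SPfin0]; omega
    · show (SPfin a1 a2 a3 1).card % 3 = 2
      rw [card_SPfin1]; omega
    · show (SPfin a1 a2 a3 2).card % 3 = 2
      rw [card_SPfin2]; omega
  -- finding a crossing edge in a boundary path
  have cross : ∀ T : Finset (YVert a1 a2 a3), ∀ p ∈ P,
      1 ≤ (fV p ∩ T).card → (fV p ∩ T).card ≤ 2 →
      ∃ u v, G.Adj u v ∧ s(u,v) ∈ pEdges p ∧ u ∈ T ∧ v ∉ T ∧ v ∈ fV p := by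
    intro T p hp hge hle
    obtain ⟨hd1, hd2, hd3, hadj1, hadj2⟩ := hpath p hp
    have hmem : ∀ w : YVert a1 a2 a3, w ∈ fV p → w = p.1 ∨ w = p.2.1 ∨ w = p.2.2 := by
      intro w hw; simpa [fV] using hw
    have he1 : s(p.1, p.2.1) ∈ pEdges p := by simp [pEdges]
    have he2 : s(p.2.1, p.2.2) ∈ pEdges p := by simp [pEdges]
    have he1' : s(p.2.1, p.1) ∈ pEdges p := by rw [Sym2.eq_swap]; exact he1
    have he2' : s(p.2.2, p.2.1) ∈ pEdges p := by rw [Sym2.eq_swap]; exact he2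
    by_cases m1 : p.1 ∈ T <;> by_cases m2 : p.2.1 ∈ T <;> by_cases m3 : p.2.2 ∈ T
    · exfalso
      have hall : fV p ∩ T = fV p := Finset.inter_eq_left.mpr (by
        intro w hw
        rcases hmem w hw with rfl | rfl | rfl
        · exact m1
        · exact m2
        · exact m3)
      rw [hall, card_fV hd1 hd2 hd3] at hle; omega
    · exact ⟨p.2.1, p.2.2, hadj2, he2, m2, m3, by simp [fV]⟩
    · exact ⟨p.1, p.2.1, hadj1, he1, m1, m2, by simp [fV]⟩
    · exact ⟨p.1, p.2.1, hadj1, he1, m1, m2, by simp [fV]⟩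
    · exact ⟨p.2.1, p.1, hadj1.symm, he1', m2, m1, by simp [fV]⟩
    · exact ⟨p.2.1, p.1, hadj1.symm, he1', m2, m1, by simp [fV]⟩
    · exact ⟨p.2.2, p.2.1, hadj2.symm, he2', m3, m2, by simp [fV]⟩
    · exfalso
      have hnone : fV p ∩ T = ∅ := by
        ext w
        simp only [Finset.mem_inter, Finset.notMem_empty, iff_false, not_and]
        intro hw
        rcases hmem w hw with rfl | rfl | rfl
        · exact m1
        · exact m2
        · exact m3
      rw [hnone] at hge; simp at hge
  have edge_ends : ∀ p : YVert a1 a2 a3 × YVert a1 a2 a3 × YVert a1 a2 a3,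
      ∀ u v : YVert a1 a2 a3, s(u,v) ∈ pEdges p → u ∈ fV p ∧ v ∈ fV p := by
    intro p u v he
    simp only [pEdges, Set.mem_insert_iff, Set.mem_singleton_iff, Sym2.eq_iff] at he
    rcases he with (⟨rfl, rfl⟩ | ⟨rfl, rfl⟩) | (⟨rfl, rfl⟩ | ⟨rfl, rfl⟩) <;>
      constructor <;> simp [fV]
  -- Q is the set of boundary paths for part i
  have hQeq : Q = P.filter (fun p => (fV p ∩ SPfin a1 a2 a3 i).card = 1 ∨
      (fV p ∩ SPfin a1 a2 a3 i).card = 2) := by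
    ext p
    rw [hQ, Finset.mem_filter]
    constructor
    · rintro ⟨hp, e, hepE, -, u, v, rfl, hu, hv⟩
      obtain ⟨hufV, hvfV⟩ := edge_ends p u v hepE
      have huS : u ∈ SPfin a1 a2 a3 i := mem_SPfin.mpr (yinPart_iff.mp hu)
      have hvS : v ∉ SPfin a1 a2 a3 i := fun hc => hv (yinPart_iff.mpr (mem_SPfin.mp hc))
      refine ⟨hp, ?_⟩
      have h1 : 1 ≤ (fV p ∩ SPfin a1 a2 a3 i).card :=
        Finset.card_pos.mpr ⟨u, Finset.mem_inter.mpr ⟨hufV, huS⟩⟩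
      have h2 : (fV p ∩ SPfin a1 a2 a3 i).card ≤ 2 := by
        have hsub : fV p ∩ SPfin a1 a2 a3 i ⊆ (fV p).erase v := by
          intro w hw
          rcases Finset.mem_inter.mp hw with ⟨hw1, hw2⟩
          exact Finset.mem_erase.mpr ⟨fun h => hvS (h ▸ hw2), hw1⟩
        calc (fV p ∩ SPfin a1 a2 a3 i).card ≤ ((fV p).erase v).card :=
              Finset.card_le_card hsub
          _ = (fV p).card - 1 := Finset.card_erase_of_mem hvfV
          _ ≤ 2 := by have := card_fV_le p; omega
      omega
    · rintro ⟨hp, hc⟩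
      obtain ⟨u, v, hadj, hepE, huT, hvT, -⟩ :=
        cross (SPfin a1 a2 a3 i) p hp (by omega) (by omega)
      exact ⟨hp, s(u,v), hepE, G.mem_edgeSet.mpr hadj, u, v, rfl,
        yinPart_iff.mpr (mem_SPfin.mp huT),
        fun hc' => hvT (mem_SPfin.mpr (yinPart_iff.mp hc'))⟩
  -- boundary paths contain a z-vertex
  have hz1 : ∀ (j : Fin 3), ∀ p ∈ P,
      ((fV p ∩ SPfin a1 a2 a3 j).card = 1 ∨ (fV p ∩ SPfin a1 a2 a3 j).card = 2) →
      1 ≤ (fV p ∩ Zfin a1 a2 a3).card := by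
    intro j p hp hc
    obtain ⟨u, v, hadj, -, huT, hvT, hvfV⟩ :=
      cross (SPfin a1 a2 a3 j) p hp (by omega) (by omega)
    rw [hG] at hadj
    have hvz : partMap v = none :=
      adj_cross A1 A2 A3 n11 n12 n13 n21 n22 n23 n31 n32 n33 hadj
        (mem_SPfin.mp huT) (fun h => hvT (mem_SPfin.mpr h))
    exact Finset.card_pos.mpr ⟨v, Finset.mem_inter.mpr ⟨hvfV, mem_Zfin.mpr hvz⟩⟩
  -- triangle inequality among two parts and z
  have tri : ∀ (j k : Fin 3), j ≠ k → ∀ p : YVert a1 a2 a3 × YVert a1 a2 a3 × YVert a1 a2 a3,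
      (fV p ∩ SPfin a1 a2 a3 j).card + (fV p ∩ Zfin a1 a2 a3).card
        + (fV p ∩ SPfin a1 a2 a3 k).card ≤ 3 := by
    intro j k hjk p
    have d1 : Disjoint (fV p ∩ SPfin a1 a2 a3 j) (fV p ∩ Zfin a1 a2 a3) := by
      rw [Finset.disjoint_left]; intro w hw hw'
      have h1 := mem_SPfin.mp (Finset.mem_inter.mp hw).2
      have h2 := mem_Zfin.mp (Finset.mem_inter.mp hw').2
      rw [h2] at h1; cases h1
    have d2 : Disjoint (fV p ∩ SPfin a1 a2 a3 j ∪ fV p ∩ Zfin a1 a2 a3)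
        (fV p ∩ SPfin a1 a2 a3 k) := by
      rw [Finset.disjoint_left]; intro w hw hw'
      have hk := mem_SPfin.mp (Finset.mem_inter.mp hw').2
      rcases Finset.mem_union.mp hw with h | h
      · have hj := mem_SPfin.mp (Finset.mem_inter.mp h).2
        rw [hj] at hk; exact hjk (Option.some.inj hk)
      · have hz := mem_Zfin.mp (Finset.mem_inter.mp h).2
        rw [hz] at hk; cases hk
    calc (fV p ∩ SPfin a1 a2 a3 j).card + (fV p ∩ Zfin a1 a2 a3).card
          + (fV p ∩ SPfin a1 a2 a3 k).card
        = ((fV p ∩ SPfin a1 a2 a3 j ∪ fV p ∩ Zfin a1 a2 a3)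
            ∪ fV p ∩ SPfin a1 a2 a3 k).card := by
          rw [Finset.card_union_of_disjoint d2, Finset.card_union_of_disjoint d1]
      _ ≤ (fV p).card := Finset.card_le_card (by
          intro w hw
          rcases Finset.mem_union.mp hw with h | h
          · rcases Finset.mem_union.mp h with h | h
            · exact (Finset.mem_inter.mp h).1
            · exact (Finset.mem_inter.mp h).1
          · exact (Finset.mem_inter.mp h).1)
      _ ≤ 3 := card_fV_le p
  -- global sums
  have hsumZ : ∑ p ∈ P, (fV p ∩ Zfin a1 a2 a3).card = 3 := by
    rw [factor_sum hP, card_Zfin]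
  have hbd : ∀ j : Fin 3, (∑ p ∈ P.filter (fun p => (fV p ∩ SPfin a1 a2 a3 j).card = 1 ∨
      (fV p ∩ SPfin a1 a2 a3 j).card = 2), (fV p ∩ SPfin a1 a2 a3 j).card) % 3 = 2 := by
    intro j
    rw [boundary_sum hP, hSPmod j]
  have hne : i + 1 ≠ i := by
    fin_cases i <;> decide
  rw [hQeq]
  exact endgame (ci := fun p => (fV p ∩ SPfin a1 a2 a3 i).card)
    (cj := fun p => (fV p ∩ SPfin a1 a2 a3 (i+1)).card)
    (zc := fun p => (fV p ∩ Zfin a1 a2 a3).card)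
    (Qj := P.filter (fun p => (fV p ∩ SPfin a1 a2 a3 (i+1)).card = 1 ∨
      (fV p ∩ SPfin a1 a2 a3 (i+1)).card = 2))
    (Finset.filter_subset _ _) (Finset.filter_subset _ _)
    (fun p hp => (Finset.mem_filter.mp hp).2)
    (fun p hp => (Finset.mem_filter.mp hp).2)
    (fun p hp => hz1 i p (Finset.mem_filter.mp hp).1 (Finset.mem_filter.mp hp).2)
    (fun p hp => hz1 (i+1) p (Finset.mem_filter.mp hp).1 (Finset.mem_filter.mp hp).2)
    hsumZ
    (fun p => tri (i+1) i hne p)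
    (hbd i) (hbd (i+1))
end
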